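/- arXiv:1411.6123 — 9 statements merged into one kernel-verified Lean document; each statement's English description precedes it below -/
import Mathlib

section
/- Let D : I(X,R) → I(X,R) be a derivation of the incidence algebra of a locally finite preordered set X over a commutative ring R with identity. Then for all i ≤ j in X and all u ≤ v in X: D(e_{ij})(u,v) = D(e_{ii})(u,i) if v = j and u ≠ i; D(e_{ij})(u,v) = D(e_{jj})(j,v) if u = i and v ≠ j; D(e_{ij})(u,v) = D(e_{ij})(i,j) if (u,v) = (i,j); and D(e_{ij})(u,v) = 0 in all other cases. Moreover, the coefficients C^{ij}_{ij} := D(e_{ij})(i,j) satisfy: D(e_{jj})(j,k) + D(e_{kk})(j,k) = 0 whenever j ≤ k, and C^{ij}_{ij} + C^{jk}_{jk} = C^{ik}_{ik} whenever i ≤ j and j ≤ k. -/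
/-- The "matrix unit" `e_{xy}` of the incidence algebra: the element equal to `1` at `(x, y)`
(where `x ≤ y`) and `0` elsewhere. -/
def eSingle (R : Type*) [CommRing R] {X : Type*} [Preorder X] [DecidableEq X]
    (x y : X) (h : x ≤ y) : IncidenceAlgebra R X :=
  ⟨fun a b => if a = x ∧ b = y then 1 else 0,
   fun a b hab => if_neg (by rintro ⟨rfl, rfl⟩; exact hab h)⟩


section Aux
variable {R X : Type*} [CommRing R] [Preorder X] [LocallyFiniteOrder X] [DecidableEq X]

lemma eSingle_apply (x y : X) (h : x ≤ y) (a b : X) :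
    eSingle R x y h a b = if a = x ∧ b = y then 1 else 0 := rfl

lemma eSingle_mul_apply (x y : X) (h : x ≤ y) (f : IncidenceAlgebra R X) (a b : X) :
    (eSingle R x y h * f) a b = if a = x then f y b else 0 := by
  rw [IncidenceAlgebra.mul_apply]
  by_cases hax : a = x
  · subst hax
    rw [if_pos rfl]
    rw [Finset.sum_eq_single y]
    · simp [eSingle_apply]
    · intro z _ hz; simp [eSingle_apply, hz]
    · intro hy
      have : ¬ y ≤ b := fun hyb => hy (Finset.mem_Icc.2 ⟨h, hyb⟩)
      simp [eSingle_apply, IncidenceAlgebra.apply_eq_zero_of_not_le this]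
  · rw [if_neg hax]
    apply Finset.sum_eq_zero
    intro z _
    simp [eSingle_apply, hax]

lemma mul_eSingle_apply (x y : X) (h : x ≤ y) (f : IncidenceAlgebra R X) (a b : X) :
    (f * eSingle R x y h) a b = if b = y then f a x else 0 := by
  rw [IncidenceAlgebra.mul_apply]
  by_cases hby : b = y
  · subst hby
    rw [if_pos rfl]
    rw [Finset.sum_eq_single x]
    · simp [eSingle_apply]
    · intro z _ hz; simp [eSingle_apply, hz]
    · intro hx
      have : ¬ a ≤ x := fun hax => hx (Finset.mem_Icc.2 ⟨hax, h⟩)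
      simp [eSingle_apply, IncidenceAlgebra.apply_eq_zero_of_not_le this]
  · rw [if_neg hby]
    apply Finset.sum_eq_zero
    intro z _
    simp [eSingle_apply, hby]

lemma eSingle_mul_eSingle (x y z : X) (hxy : x ≤ y) (hyz : y ≤ z) :
    eSingle R x y hxy * eSingle R y z hyz = eSingle R x z (hxy.trans hyz) := by
  ext a b _
  rw [eSingle_mul_apply, eSingle_apply, eSingle_apply]
  by_cases hax : a = x <;> simp [hax]

lemma eSingle_mul_eSingle_ne (x y z w : X) (hxy : x ≤ y) (hzw : z ≤ w) (hne : y ≠ z) :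
    eSingle R x y hxy * eSingle R z w hzw = 0 := by
  ext a b _
  rw [eSingle_mul_apply, eSingle_apply]
  by_cases hax : a = x <;> simp [hax, hne]

end Aux

/-- For a derivation `D` of the incidence algebra `I(X,R)`:
for all `i ≤ j` and `u ≤ v`, the entries of `D(e_{ij})` are as described
(`D(e_{ij})(u,j) = D(e_{ii})(u,i)` for `u ≠ i`, `D(e_{ij})(i,v) = D(e_{jj})(j,v)` for `v ≠ j`,
the `(i,j)`-entry is `C^{ij}_{ij}`, and all other entries vanish), and moreover
`D(e_{jj})(j,k) + D(e_{kk})(j,k) = 0` for `j ≤ k` and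
`C^{ij}_{ij} + C^{jk}_{jk} = C^{ik}_{ik}` for `i ≤ j ≤ k`. -/
theorem derivation_apply_eSingle {R X : Type*} [CommRing R] [Preorder X]
    [LocallyFiniteOrder X] [DecidableEq X]
    (D : IncidenceAlgebra R X →ₗ[R] IncidenceAlgebra R X)
    (hD : ∀ f g : IncidenceAlgebra R X, D (f * g) = D f * g + f * D g) :
    (∀ i j : X, ∀ hij : i ≤ j, ∀ u v : X, u ≤ v →
      (v = j → u ≠ i → D (eSingle R i j hij) u v = D (eSingle R i i le_rfl) u i) ∧
      (u = i → v ≠ j → D (eSingle R i j hij) u v = D (eSingle R j j le_rfl) j v) ∧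
      (u = i → v = j → D (eSingle R i j hij) u v = D (eSingle R i j hij) i j) ∧
      (u ≠ i → v ≠ j → D (eSingle R i j hij) u v = 0)) ∧
    (∀ j k : X, ∀ hjk : j ≤ k,
      D (eSingle R j j le_rfl) j k + D (eSingle R k k le_rfl) j k = 0) ∧
    (∀ i j k : X, ∀ hij : i ≤ j, ∀ hjk : j ≤ k,
      D (eSingle R i j hij) i j + D (eSingle R j k hjk) j k
        = D (eSingle R i k (hij.trans hjk)) i k) := by

  -- basic identities
  refine ⟨?_, ?_, ?_⟩
  · intro i j hij u v _
    set f := D (eSingle R i j hij) with hf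
    have hA : ∀ u v : X, f u v =
        (if v = j then D (eSingle R i i le_rfl) u i else 0) + (if u = i then f i v else 0) := by
      intro u v
      have h1 : eSingle R i i le_rfl * eSingle R i j hij = eSingle R i j hij :=
        eSingle_mul_eSingle i i j le_rfl hij
      have h2 := hD (eSingle R i i le_rfl) (eSingle R i j hij)
      rw [h1] at h2
      calc f u v = (D (eSingle R i i le_rfl) * eSingle R i j hij
              + eSingle R i i le_rfl * D (eSingle R i j hij)) u v := by rw [← h2]
        _ = _ := by
          rw [IncidenceAlgebra.add_apply, mul_eSingle_apply, eSingle_mul_apply]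
    have hB : ∀ u v : X, f u v =
        (if v = j then f u j else 0) + (if u = i then D (eSingle R j j le_rfl) j v else 0) := by
      intro u v
      have h1 : eSingle R i j hij * eSingle R j j le_rfl = eSingle R i j hij :=
        eSingle_mul_eSingle i j j hij le_rfl
      have h2 := hD (eSingle R i j hij) (eSingle R j j le_rfl)
      rw [h1] at h2
      calc f u v = (D (eSingle R i j hij) * eSingle R j j le_rfl
              + eSingle R i j hij * D (eSingle R j j le_rfl)) u v := by rw [← h2]
        _ = _ := by
          rw [IncidenceAlgebra.add_apply, mul_eSingle_apply, eSingle_mul_apply]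
    refine ⟨?_, ?_, ?_, ?_⟩
    · intro hvj hui
      rw [hA u v, if_pos hvj, if_neg hui, add_zero]
    · intro hui hvj
      rw [hB u v, if_neg hvj, if_pos hui, zero_add]
    · intro hui hvj; rw [hui, hvj]
    · intro hui hvj
      rw [hA u v, if_neg hvj, if_neg hui, add_zero]
  · intro j k hjk
    by_cases hne : j = k
    · subst hne
      have h1 : eSingle R j j le_rfl * eSingle R j j le_rfl = eSingle R j j le_rfl :=
        eSingle_mul_eSingle j j j le_rfl le_rfl
      have h2 := hD (eSingle R j j le_rfl) (eSingle R j j le_rfl)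
      rw [h1] at h2
      have h3 := congrFun (congrFun (congrArg DFunLike.coe h2) j) j
      rw [IncidenceAlgebra.add_apply, mul_eSingle_apply, eSingle_mul_apply,
        if_pos rfl] at h3
      have hz : D (eSingle R j j le_rfl) j j = 0 := by linear_combination -h3
      rw [hz, add_zero]
    · have h1 : eSingle R j j le_rfl * eSingle R k k le_rfl = 0 :=
        eSingle_mul_eSingle_ne j j k k le_rfl le_rfl hne
      have h2 := hD (eSingle R j j le_rfl) (eSingle R k k le_rfl)
      rw [h1, map_zero] at h2
      have h3 := congrFun (congrFun (congrArg DFunLike.coe h2.symm) j) k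
      rw [IncidenceAlgebra.add_apply, mul_eSingle_apply, eSingle_mul_apply,
        if_pos rfl, if_pos rfl, IncidenceAlgebra.zero_apply] at h3
      exact h3
  · intro i j k hij hjk
    have h1 : eSingle R i j hij * eSingle R j k hjk = eSingle R i k (hij.trans hjk) :=
      eSingle_mul_eSingle i j k hij hjk
    have h2 := hD (eSingle R i j hij) (eSingle R j k hjk)
    rw [h1] at h2
    have h3 := congrFun (congrFun (congrArg DFunLike.coe h2) i) k
    rw [IncidenceAlgebra.add_apply, mul_eSingle_apply, eSingle_mul_apply,
      if_pos rfl, if_pos rfl] at h3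
    linear_combination -h3
end

section
/- Let f be a transitive mapping on a locally finite preordered set X with values in a commutative ring R with identity, i.e. f assigns to each pair i ≤ j an element f(i,j) ∈ R with f(i,j) + f(j,k) = f(i,k) whenever i ≤ j and j ≤ k. Then the R-linear map Δ_f : I(X,R) → I(X,R) defined by Δ_f(g)(i,j) = f(i,j)·g(i,j) for all i ≤ j (equivalently, Δ_f(e_{ij}) = f(i,j) e_{ij} on basis elements) is a derivation of the incidence algebra I(X,R). -/
/-- The map `Δ_f` on the incidence algebra induced by a mapping `f : X → X → R`:
`Δ_f(g)(i,j) = f(i,j) · g(i,j)`. -/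
def deltaMap {R X : Type*} [CommRing R] [Preorder X] (f : X → X → R)
    (g : IncidenceAlgebra R X) : IncidenceAlgebra R X :=
  ⟨fun i j => f i j * g i j,
   fun i j hij => by
     show f i j * g i j = 0
     rw [IncidenceAlgebra.apply_eq_zero_of_not_le hij g, mul_zero]⟩

lemma deltaMap_apply {R X : Type*} [CommRing R] [Preorder X] (f : X → X → R)
    (g : IncidenceAlgebra R X) (i j : X) : deltaMap f g i j = f i j * g i j := rfl

/-- If `f` is a transitive mapping (`f(i,j) + f(j,k) = f(i,k)` whenever
`i ≤ j ≤ k`) with values in `R`, then the `R`-linear map `Δ_f : I(X,R) → I(X,R)`,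
`Δ_f(g)(i,j) = f(i,j)·g(i,j)`, is a derivation of the incidence algebra. -/
theorem deltaMap_isDerivation {R X : Type*} [CommRing R] [Preorder X]
    [LocallyFiniteOrder X] [DecidableEq X] (f : X → X → R)
    (hf : ∀ i j k : X, i ≤ j → j ≤ k → f i j + f j k = f i k) :
    (∀ g h : IncidenceAlgebra R X, deltaMap f (g + h) = deltaMap f g + deltaMap f h) ∧
    (∀ (r : R) (g : IncidenceAlgebra R X), deltaMap f (r • g) = r • deltaMap f g) ∧
    (∀ g h : IncidenceAlgebra R X,
      deltaMap f (g * h) = deltaMap f g * h + g * deltaMap f h) := by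
  refine ⟨?_, ?_, ?_⟩
  · intro g h
    ext i j _
    simp [deltaMap_apply, mul_add]
  · intro r g
    ext i j _
    simp [deltaMap_apply, mul_left_comm]
  · intro g h
    ext i j hij
    simp only [deltaMap_apply, IncidenceAlgebra.mul_apply, IncidenceAlgebra.add_apply,
      Finset.mul_sum, ← Finset.sum_add_distrib]
    refine Finset.sum_congr rfl fun x hx => ?_
    obtain ⟨hix, hxj⟩ := Finset.mem_Icc.1 hx
    rw [← hf i x j hix hxj]
    ring
end

section
/- Let f be a transitive mapping on a locally finite preordered set X with values in a commutative ring R with identity, and let Δ_f : I(X,R) → I(X,R) be the induced derivation given by Δ_f(g)(i,j) = f(i,j)·g(i,j). Then Δ_f is an inner derivation (i.e. Δ_f = Inn_g for some g ∈ I(X,R), where Inn_g(h) = gh − hg) if and only if f is trivial, i.e. there exists a mapping σ : X → R such that f(i,j) = σ(i) − σ(j) for all i ≤ j. -/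
/-- For a transitive mapping `f`, the induced derivation `Δ_f` of `I(X,R)` is
inner (i.e. `Δ_f = Inn_g` for some `g ∈ I(X,R)`, where `Inn_g(h) = gh − hg`) if and only if `f`
is trivial, i.e. `f(i,j) = σ(i) − σ(j)` for some `σ : X → R`. -/
theorem deltaMap_isInner_iff_trivial {R X : Type*} [CommRing R] [Preorder X]
    [LocallyFiniteOrder X] [DecidableEq X] (f : X → X → R)
    (hf : ∀ i j k : X, i ≤ j → j ≤ k → f i j + f j k = f i k) :
    (∃ g : IncidenceAlgebra R X, ∀ h : IncidenceAlgebra R X, deltaMap f h = g * h - h * g) ↔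
      ∃ σ : X → R, ∀ i j : X, i ≤ j → f i j = σ i - σ j := by
  constructor
  · rintro ⟨g, hg⟩
    refine ⟨fun i => g i i, fun i j hij => ?_⟩
    -- the single element e_{ij}
    set e : IncidenceAlgebra R X :=
      ⟨fun a b => if a = i ∧ b = j then 1 else 0,
       fun a b hab => by
         show (if a = i ∧ b = j then (1 : R) else 0) = 0
         rw [if_neg]; rintro ⟨rfl, rfl⟩; exact hab hij⟩ with he
    have h1 := congr_arg (fun h : IncidenceAlgebra R X => h i j) (hg e)
    simp only [IncidenceAlgebra.sub_apply, IncidenceAlgebra.mul_apply] at h1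
    have hde : deltaMap f e i j = f i j := by
      show f i j * (if i = i ∧ j = j then (1:R) else 0) = f i j
      simp
    have hge : ∑ z ∈ Finset.Icc i j, g i z * e z j = g i i := by
      have : ∀ z ∈ Finset.Icc i j,
          g i z * e z j = if z = i then g i z else 0 := by
        intro z hz
        show g i z * (if z = i ∧ j = j then (1:R) else 0) = _
        by_cases h : z = i <;> simp [h]
      rw [Finset.sum_congr rfl this, Finset.sum_ite_eq' (Finset.Icc i j) i]
      simp [hij]
    have heg : ∑ z ∈ Finset.Icc i j, e i z * g z j = g j j := by
      have : ∀ z ∈ Finset.Icc i j,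
          e i z * g z j = if z = j then g z j else 0 := by
        intro z hz
        show (if i = i ∧ z = j then (1:R) else 0) * g z j = _
        by_cases h : z = j <;> simp [h]
      rw [Finset.sum_congr rfl this, Finset.sum_ite_eq' (Finset.Icc i j) j]
      simp [hij]
    rw [hde, hge, heg] at h1
    exact h1
  · rintro ⟨σ, hσ⟩
    obtain ⟨g, hg1⟩ : ∃ g : IncidenceAlgebra R X,
        ∀ a b, g a b = if a = b then σ a else 0 :=
      ⟨⟨fun a b => if a = b then σ a else 0,
        fun a b hab => by
          show (if a = b then σ a else 0) = 0
          rw [if_neg]; rintro rfl; exact hab le_rfl⟩, fun a b => rfl⟩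
    refine ⟨g, fun h => ?_⟩
    ext i j
    by_cases hij : i ≤ j
    · simp only [IncidenceAlgebra.sub_apply, IncidenceAlgebra.mul_apply]
      have hgh : ∑ z ∈ Finset.Icc i j, g i z * h z j = σ i * h i j := by
        have : ∀ z ∈ Finset.Icc i j,
            g i z * h z j = if z = i then σ i * h i j else 0 := by
          intro z hz
          rw [hg1]
          by_cases h' : z = i
          · subst h'; simp
          · rw [if_neg (fun e => h' e.symm), if_neg h', zero_mul]
        rw [Finset.sum_congr rfl this, Finset.sum_ite_eq' (Finset.Icc i j) i]
        simp [hij]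
      have hhg : ∑ z ∈ Finset.Icc i j, h i z * g z j = h i j * σ j := by
        have : ∀ z ∈ Finset.Icc i j,
            h i z * g z j = if z = j then h i j * σ j else 0 := by
          intro z hz
          rw [hg1]
          by_cases h' : z = j
          · subst h'; simp
          · rw [if_neg h', if_neg h', mul_zero]
        rw [Finset.sum_congr rfl this, Finset.sum_ite_eq' (Finset.Icc i j) j]
        simp [hij]
      show f i j * h i j = _
      rw [hgh, hhg, hσ i j hij]
      ring
    · rw [IncidenceAlgebra.apply_eq_zero_of_not_le hij,
        IncidenceAlgebra.apply_eq_zero_of_not_le hij]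
end

section
/- Let R be a commutative ring with identity, X a locally finite preordered set, and D a derivation of the incidence algebra I(X,R). Then there exist an element g ∈ I(X,R) and a transitive mapping f (i.e. f(i,j) + f(j,k) = f(i,k) whenever i ≤ j ≤ k) such that D = Inn_g + Δ_f, where Inn_g(h) = gh − hg and Δ_f(h)(i,j) = f(i,j)·h(i,j). -/
open Finset
open scoped Classical

section Aux

variable {R X : Type*} [CommRing R] [Preorder X] [LocallyFiniteOrder X] [DecidableEq X]

/-- The "matrix unit" at `(x, y)` in the incidence algebra. -/
noncomputable def sing (x y : X) : IncidenceAlgebra R X :=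
  ⟨fun u v => if u = x ∧ v = y ∧ x ≤ y then 1 else 0, fun u v huv => by
    split_ifs with h
    · obtain ⟨rfl, rfl, hxy⟩ := h
      exact absurd hxy huv
    · rfl⟩

lemma sing_apply (x y u v : X) :
    (sing x y : IncidenceAlgebra R X) u v = if u = x ∧ v = y ∧ x ≤ y then 1 else 0 := rfl

lemma mul_sing (A : IncidenceAlgebra R X) (u : X) {y z : X} (hyz : y ≤ z) :
    (A * (sing y z : IncidenceAlgebra R X)) u z = A u y := by
  rw [IncidenceAlgebra.mul_apply]
  by_cases huy : u ≤ y
  · rw [Finset.sum_eq_single y]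
    · simp [sing_apply, hyz]
    · intro w _ hwy
      simp [sing_apply, hwy]
    · intro hy
      exact absurd (Finset.mem_Icc.2 ⟨huy, hyz⟩) hy
  · rw [IncidenceAlgebra.apply_eq_zero_of_not_le huy]
    apply Finset.sum_eq_zero
    intro w hw
    by_cases hwy : w = y
    · subst hwy
      exact absurd (Finset.mem_Icc.1 hw).1 huy
    · simp [sing_apply, hwy]

lemma sing_mul (A : IncidenceAlgebra R X) (v : X) {x y : X} (hxy : x ≤ y) :
    ((sing x y : IncidenceAlgebra R X) * A) x v = A y v := by
  rw [IncidenceAlgebra.mul_apply]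
  by_cases hyv : y ≤ v
  · rw [Finset.sum_eq_single y]
    · simp [sing_apply, hxy]
    · intro w _ hwy
      simp [sing_apply, hwy]
    · intro hy
      exact absurd (Finset.mem_Icc.2 ⟨hxy, hyv⟩) hy
  · rw [IncidenceAlgebra.apply_eq_zero_of_not_le hyv]
    apply Finset.sum_eq_zero
    intro w hw
    by_cases hwy : w = y
    · subst hwy
      exact absurd (Finset.mem_Icc.1 hw).2 hyv
    · simp [sing_apply, hwy]

lemma sing_mul_sing {x y z : X} (hxy : x ≤ y) (hyz : y ≤ z) :
    (sing x y : IncidenceAlgebra R X) * sing y z = sing x z := by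
  ext u v huv
  by_cases hu : u = x
  · subst hu
    rw [sing_mul _ v hxy, sing_apply, sing_apply]
    by_cases hv : v = z
    · subst hv
      simp [hyz, hxy.trans hyz]
    · simp [hv]
  · rw [sing_apply, if_neg (fun hc => hu hc.1), IncidenceAlgebra.mul_apply]
    apply Finset.sum_eq_zero
    intro w _
    rw [sing_apply, if_neg (fun hc => hu hc.1), zero_mul]

lemma sing_mul_sing_ne {x z : X} (hxz : x ≠ z) :
    (sing x x : IncidenceAlgebra R X) * sing z z = 0 := by
  ext u v huv
  rw [IncidenceAlgebra.mul_apply, IncidenceAlgebra.zero_apply]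
  apply Finset.sum_eq_zero
  intro w _
  by_cases hw : w = x
  · rw [hw, sing_apply, sing_apply]
    have : ¬(x = z ∧ v = z ∧ z ≤ z) := fun hc => hxz hc.1
    rw [if_neg this, mul_zero]
  · rw [sing_apply, if_neg (fun hc => hw (hc.2.1)), zero_mul]

lemma conj_eq (h : IncidenceAlgebra R X) {x y : X} (hxy : x ≤ y) :
    (sing x x : IncidenceAlgebra R X) * h * sing y y = h x y • sing x y := by
  ext u v huv
  rw [IncidenceAlgebra.constSMul_apply, sing_apply, smul_eq_mul]
  by_cases hv : v = y
  · subst hv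
    rw [mul_sing ((sing x x : IncidenceAlgebra R X) * h) u (le_refl _)]
    by_cases hu : u = x
    · subst hu
      rw [sing_mul h _ (le_refl _)]
      simp [hxy]
    · rw [if_neg (fun hc => hu hc.1), mul_zero, IncidenceAlgebra.mul_apply]
      apply Finset.sum_eq_zero
      intro w _
      rw [sing_apply, if_neg (fun hc => hu hc.1), zero_mul]
  · rw [if_neg (fun hc => hv hc.2.1), mul_zero, IncidenceAlgebra.mul_apply]
    apply Finset.sum_eq_zero
    intro w _
    rw [sing_apply y y w v, if_neg (fun hc => hv hc.2.1), mul_zero]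

lemma singmul_mul (h B : IncidenceAlgebra R X) (x y : X) :
    ((sing x x : IncidenceAlgebra R X) * h * B) x y = ∑ z ∈ Icc x y, h x z * B z y := by
  rw [IncidenceAlgebra.mul_apply]
  exact Finset.sum_congr rfl fun z _ => by rw [sing_mul h z (le_refl x)]

end Aux

/-- Every derivation `D` of the incidence algebra `I(X,R)` decomposes as
`D = Inn_g + Δ_f` for some `g ∈ I(X,R)` and some transitive mapping `f`. -/
theorem derivation_eq_inner_add_deltaMap {R X : Type*} [CommRing R] [Preorder X]
    [LocallyFiniteOrder X] [DecidableEq X]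
    (D : IncidenceAlgebra R X →ₗ[R] IncidenceAlgebra R X)
    (hD : ∀ f g : IncidenceAlgebra R X, D (f * g) = D f * g + f * D g) :
    ∃ (g : IncidenceAlgebra R X) (f : X → X → R),
      (∀ i j k : X, i ≤ j → j ≤ k → f i j + f j k = f i k) ∧
      ∀ h : IncidenceAlgebra R X, D h = (g * h - h * g) + deltaMap f h := by
  -- diagonal derivative facts
  have fact1 : ∀ x : X, D (sing x x) x x = 0 := by
    intro x
    have h1 : D (sing x x) = D (sing x x) * sing x x + sing x x * D (sing x x) := by
      conv_lhs => rw [← sing_mul_sing (le_refl x) (le_refl x), hD]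
    have h2 := congrFun (DFunLike.congr_fun h1 x) x
    rw [IncidenceAlgebra.add_apply, mul_sing _ x (le_refl x),
      sing_mul _ x (le_refl x)] at h2
    linear_combination -h2
  have fact2 : ∀ x z : X, x ≠ z → D (sing x x) x z + D (sing z z) x z = 0 := by
    intro x z hxz
    have h1 : (0 : IncidenceAlgebra R X)
        = D (sing x x) * sing z z + sing x x * D (sing z z) := by
      rw [← hD, sing_mul_sing_ne hxz, map_zero]
    have h2 := congrFun (DFunLike.congr_fun h1 x) z
    rw [IncidenceAlgebra.add_apply, mul_sing _ x (le_refl z),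
      sing_mul _ z (le_refl x), IncidenceAlgebra.zero_apply] at h2
    linear_combination -h2
  refine ⟨⟨fun u v => D (sing v v) u v,
      fun u v huv => IncidenceAlgebra.apply_eq_zero_of_not_le huv _⟩,
    fun x y => D (sing x y) x y, ?_, ?_⟩
  · -- transitivity of f
    intro i j k hij hjk
    have h1 : D (sing i k) = D (sing i j) * sing j k + sing i j * D (sing j k) := by
      rw [← sing_mul_sing hij hjk, hD]
    have h2 := congrFun (DFunLike.congr_fun h1 i) k
    rw [IncidenceAlgebra.add_apply, mul_sing _ i hjk, sing_mul _ k hij] at h2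
    linear_combination -h2
  · -- the decomposition
    intro h
    ext x y hxy
    -- key Leibniz computation
    have E1 : h x y • D (sing x y)
        = (D (sing x x) * h + sing x x * D h) * sing y y
          + (sing x x * h) * D (sing y y) := by
      rw [← map_smul, ← conj_eq h hxy, hD, hD]
    have E2 := congrFun (DFunLike.congr_fun E1 x) y
    rw [IncidenceAlgebra.add_apply, mul_sing _ x (le_refl y), IncidenceAlgebra.add_apply,
      sing_mul _ y (le_refl x), singmul_mul, IncidenceAlgebra.constSMul_apply,
      smul_eq_mul, IncidenceAlgebra.mul_apply] at E2
    -- identify the two sums with products against g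
    set g : IncidenceAlgebra R X :=
      ⟨fun u v => D (sing v v) u v,
        fun u v huv => IncidenceAlgebra.apply_eq_zero_of_not_le huv _⟩ with hg
    have S1 : (g * h) x y + ∑ z ∈ Icc x y, D (sing x x) x z * h z y = 0 := by
      rw [IncidenceAlgebra.mul_apply, ← Finset.sum_add_distrib]
      apply Finset.sum_eq_zero
      intro z _
      have hgz : g x z = D (sing z z) x z := rfl
      rw [hgz, ← add_mul]
      by_cases hzx : z = x
      · subst hzx
        rw [fact1 z, add_zero, zero_mul]
      · rw [add_comm, fact2 x z (fun hc => hzx hc.symm), zero_mul]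
    have S2 : (h * g) x y = ∑ z ∈ Icc x y, h x z * D (sing y y) z y := by
      rw [IncidenceAlgebra.mul_apply]
      exact Finset.sum_congr rfl fun z _ => rfl
    have T : ((g * h - h * g) + deltaMap (fun x y => D (sing x y) x y) h) x y
        = ((g * h) x y - (h * g) x y) + D (sing x y) x y * h x y := rfl
    rw [T]
    linear_combination -E2 - S1 + S2
end

section
/- Let R be a commutative ring with identity and X a locally finite preordered set. Every derivation of the incidence algebra I(X,R) is inner if and only if every transitive mapping f : {(i,j) : i ≤ j} → R (satisfying f(i,j) + f(j,k) = f(i,k) for i ≤ j ≤ k) is trivial, i.e. of the form f(i,j) = σ(i) − σ(j) for some σ : X → R. -/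
open Finset

namespace IncAux

variable {R X : Type*} [CommRing R] [Preorder X] [LocallyFiniteOrder X] [DecidableEq X]

/-- Matrix unit `e_{ab}` in the incidence algebra. -/
def sg (a b : X) (hab : a ≤ b) : IncidenceAlgebra R X :=
  ⟨fun x y => if x = a ∧ y = b then 1 else 0, by
    intro x y hxy
    split_ifs with h
    · obtain ⟨rfl, rfl⟩ := h; exact absurd hab hxy
    · rfl⟩

@[simp] lemma sg_apply (a b : X) (hab : a ≤ b) (x y : X) :
    (sg (R := R) a b hab) x y = if x = a ∧ y = b then 1 else 0 := rfl

lemma mul_sg_apply (h : IncidenceAlgebra R X) (a b : X) (hab : a ≤ b) (x : X) (hxa : x ≤ a) :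
    ((h * sg a b hab : IncidenceAlgebra R X)) x b = h x a := by
  simp only [IncidenceAlgebra.mul_apply, sg_apply, and_true, mul_ite, mul_one, mul_zero]
  rw [Finset.sum_ite_eq' (Icc x b) a (fun z => h x z)]
  simp [mem_Icc, hxa, hab]

lemma sg_mul_apply (a b : X) (hab : a ≤ b) (h : IncidenceAlgebra R X) (y : X) (hby : b ≤ y) :
    ((sg a b hab * h : IncidenceAlgebra R X)) a y = h b y := by
  simp only [IncidenceAlgebra.mul_apply, sg_apply, true_and, ite_mul, one_mul, zero_mul]
  rw [Finset.sum_ite_eq' (Icc a y) b (fun z => h z y)]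
  simp [mem_Icc, hab, hby]

lemma mul_sg_same_apply (h : IncidenceAlgebra R X) (c : X) (u v : X) :
    ((h * sg c c le_rfl : IncidenceAlgebra R X)) u v = if v = c then h u c else 0 := by
  simp only [IncidenceAlgebra.mul_apply, sg_apply, mul_ite, mul_one, mul_zero]
  by_cases hv : v = c
  · subst hv
    simp only [and_true]
    rw [Finset.sum_ite_eq' (Icc u v) v (fun z => h u z)]
    by_cases huv : u ≤ v
    · simp [mem_Icc, huv]
    · simp [mem_Icc, huv, IncidenceAlgebra.apply_eq_zero_of_not_le huv]
  · simp [hv]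

lemma sg_same_mul_apply (c : X) (h : IncidenceAlgebra R X) (u v : X) :
    ((sg c c le_rfl * h : IncidenceAlgebra R X)) u v = if u = c then h c v else 0 := by
  simp only [IncidenceAlgebra.mul_apply, sg_apply, ite_mul, one_mul, zero_mul]
  by_cases hu : u = c
  · subst hu
    simp only [true_and]
    rw [Finset.sum_ite_eq' (Icc u v) u (fun z => h z v)]
    by_cases huv : u ≤ v
    · simp [mem_Icc, huv]
    · simp [mem_Icc, huv, IncidenceAlgebra.apply_eq_zero_of_not_le huv]
  · simp [hu]

lemma sg_mul_sg (i j k : X) (hij : i ≤ j) (hjk : j ≤ k) :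
    (sg (R := R) i j hij) * sg j k hjk = sg i k (hij.trans hjk) := by
  ext x y hxy
  simp only [IncidenceAlgebra.mul_apply, sg_apply]
  by_cases hx : x = i ∧ y = k
  · obtain ⟨rfl, rfl⟩ := hx
    simp only [true_and, and_true, if_pos trivial]
    rw [Finset.sum_congr rfl (fun z _ => by rw [ite_mul, one_mul, zero_mul, ← ite_and])]
    have : ∀ z, (z = j ∧ z = j) = (z = j) := fun z => by simp
    simp only [this]
    rw [Finset.sum_ite_eq' (Icc x y) j (fun _ => (1 : R))]
    simp [mem_Icc, hij, hjk]
  · rw [if_neg hx]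
    refine Finset.sum_eq_zero fun z hz => ?_
    by_cases h1 : x = i ∧ z = j
    · have h2 : ¬(z = j ∧ y = k) := fun h2 => hx ⟨h1.1, h2.2⟩
      rw [if_neg h2, mul_zero]
    · rw [if_neg h1, zero_mul]

lemma corner (h : IncidenceAlgebra R X) (x y : X) (hxy : x ≤ y) :
    sg x x le_rfl * h * sg y y le_rfl = h x y • sg x y hxy := by
  ext u v huv
  rw [mul_sg_same_apply, IncidenceAlgebra.constSMul_apply, smul_eq_mul, sg_apply]
  by_cases hv : v = y
  · subst hv
    rw [if_pos rfl, sg_same_mul_apply]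
    by_cases hu : u = x
    · subst hu; simp
    · simp [hu]
  · simp [hv, fun h : u = x ∧ v = y => hv h.2]

end IncAux

namespace IncAux
variable {R X : Type*} [CommRing R] [Preorder X] [LocallyFiniteOrder X] [DecidableEq X]

/-- The pointwise-scaling linear map `h ↦ f · h`. -/
def scaleD (f : X → X → R) : IncidenceAlgebra R X →ₗ[R] IncidenceAlgebra R X where
  toFun h := ⟨fun x y => f x y * h x y, fun x y hxy => by
    simp [IncidenceAlgebra.apply_eq_zero_of_not_le hxy]⟩
  map_add' h k := by
    ext x y _
    simp [IncidenceAlgebra.add_apply, mul_add]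
  map_smul' c h := by
    ext x y _
    simp only [IncidenceAlgebra.coe_mk, IncidenceAlgebra.constSMul_apply, smul_eq_mul,
      RingHom.id_apply]
    ring

@[simp] lemma scaleD_apply (f : X → X → R) (h : IncidenceAlgebra R X) (x y : X) :
    scaleD f h x y = f x y * h x y := rfl

lemma scaleD_leibniz (f : X → X → R)
    (hf : ∀ i j k : X, i ≤ j → j ≤ k → f i j + f j k = f i k)
    (h k : IncidenceAlgebra R X) :
    scaleD f (h * k) = scaleD f h * k + h * scaleD f k := by
  ext x y hxy
  simp only [scaleD_apply, IncidenceAlgebra.add_apply, IncidenceAlgebra.mul_apply, scaleD_apply,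
    Finset.mul_sum]
  rw [← Finset.sum_add_distrib]
  refine Finset.sum_congr rfl fun z hz => ?_
  rw [mem_Icc] at hz
  rw [← hf x z y hz.1 hz.2]
  ring

end IncAux

namespace IncAux
variable {R X : Type*} [CommRing R] [Preorder X] [LocallyFiniteOrder X] [DecidableEq X]

lemma mp_dir
    (hInner : ∀ D : IncidenceAlgebra R X →ₗ[R] IncidenceAlgebra R X,
        (∀ f g : IncidenceAlgebra R X, D (f * g) = D f * g + f * D g) →
        ∃ g : IncidenceAlgebra R X, ∀ h : IncidenceAlgebra R X, D h = g * h - h * g)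
    (f : X → X → R) (hf : ∀ i j k : X, i ≤ j → j ≤ k → f i j + f j k = f i k) :
    ∃ σ : X → R, ∀ i j : X, i ≤ j → f i j = σ i - σ j := by
  obtain ⟨g, hg⟩ := hInner (scaleD f) (scaleD_leibniz f hf)
  refine ⟨fun x => g x x, fun i j hij => ?_⟩
  have h1 : scaleD f (sg i j hij) i j = f i j := by simp
  rw [hg (sg i j hij)] at h1
  rw [IncidenceAlgebra.sub_apply] at h1
  rw [mul_sg_apply g i j hij i le_rfl, sg_mul_apply i j hij g j le_rfl] at h1
  exact h1.symm

end IncAux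

namespace IncAux
variable {R X : Type*} [CommRing R] [Preorder X] [LocallyFiniteOrder X] [DecidableEq X]

lemma mul_sg_same_apply_self (h : IncidenceAlgebra R X) (c u : X) :
    ((h * sg c c le_rfl : IncidenceAlgebra R X)) u c = h u c := by
  rw [mul_sg_same_apply, if_pos rfl]

lemma sg_same_mul_apply_self (c : X) (h : IncidenceAlgebra R X) (v : X) :
    ((sg c c le_rfl * h : IncidenceAlgebra R X)) c v = h c v := by
  rw [sg_same_mul_apply, if_pos rfl]

lemma mpr_dir
    (H : ∀ f : X → X → R, (∀ i j k : X, i ≤ j → j ≤ k → f i j + f j k = f i k) →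
        ∃ σ : X → R, ∀ i j : X, i ≤ j → f i j = σ i - σ j)
    (D : IncidenceAlgebra R X →ₗ[R] IncidenceAlgebra R X)
    (hD : ∀ f g : IncidenceAlgebra R X, D (f * g) = D f * g + f * D g) :
    ∃ g : IncidenceAlgebra R X, ∀ h : IncidenceAlgebra R X, D h = g * h - h * g := by
  classical
  -- Step 1 : the diagonal entries of `D (e x)` vanish.
  have step1 : ∀ x : X, D (sg x x le_rfl) x x = 0 := by
    intro x
    have h1 := hD (sg x x le_rfl) (sg x x le_rfl)
    rw [sg_mul_sg x x x le_rfl le_rfl] at h1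
    have h2 := congrArg (fun t : IncidenceAlgebra R X => t x x) h1
    simp only [IncidenceAlgebra.add_apply, mul_sg_same_apply_self,
      sg_same_mul_apply_self] at h2
    linear_combination -h2
  -- orthogonality of the diagonal matrix units
  have orth : ∀ x y : X, x ≠ y →
      (sg (R := R) x x le_rfl) * sg y y le_rfl = 0 := by
    intro x y hxy
    ext u v _
    rw [IncidenceAlgebra.zero_apply]
    simp only [IncidenceAlgebra.mul_apply, sg_apply]
    refine Finset.sum_eq_zero fun z _ => ?_
    by_cases h1 : u = x ∧ z = x
    · have h2 : ¬(z = y ∧ v = y) := fun h2 => hxy (h1.2.symm.trans h2.1)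
      rw [if_neg h2, mul_zero]
    · rw [if_neg h1, zero_mul]
  -- Step 2 : skew-symmetry of the off-diagonal entries
  have step2 : ∀ x y : X, x ≤ y → x ≠ y →
      D (sg x x le_rfl) x y + D (sg y y le_rfl) x y = 0 := by
    intro x y hxy hne
    have h1 := hD (sg x x le_rfl) (sg y y le_rfl)
    rw [orth x y hne, map_zero] at h1
    have h2 := congrArg (fun t : IncidenceAlgebra R X => t x y) h1
    simp only [IncidenceAlgebra.zero_apply, IncidenceAlgebra.add_apply,
      mul_sg_same_apply_self, sg_same_mul_apply_self] at h2
    linear_combination -h2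
  -- Step 3 : the candidate inner element `g`
  set g : IncidenceAlgebra R X :=
    ⟨fun x y => -(D (sg x x le_rfl) x y), fun x y hxy => by
      rw [IncidenceAlgebra.apply_eq_zero_of_not_le hxy, neg_zero]⟩ with hgdef
  have gapp : ∀ x y : X, g x y = -(D (sg x x le_rfl) x y) := fun x y => rfl
  have hgy : ∀ z y : X, z ≤ y → D (sg y y le_rfl) z y = g z y := by
    intro z y hzy
    by_cases hz : z = y
    · subst hz; rw [gapp, step1, neg_zero]
    · rw [gapp]; linear_combination step2 z y hzy hz
  -- Step 4 : the key local formula for `D`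
  have key : ∀ (h : IncidenceAlgebra R X) (x y : X) (hxy : x ≤ y),
      D h x y = D (sg x y hxy) x y * h x y
        + ((g * h : IncidenceAlgebra R X) x y - ((h * g : IncidenceAlgebra R X)) x y) := by
    intro h x y hxy
    have elem : h x y • D (sg x y hxy)
        = D (sg x x le_rfl) * (h * sg y y le_rfl)
          + sg x x le_rfl * (D h * sg y y le_rfl + h * D (sg y y le_rfl)) := by
      calc h x y • D (sg x y hxy) = D (h x y • sg x y hxy) := (map_smul D _ _).symm
        _ = D (sg x x le_rfl * (h * sg y y le_rfl)) := by
            rw [← corner h x y hxy, mul_assoc]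
        _ = D (sg x x le_rfl) * (h * sg y y le_rfl)
            + sg x x le_rfl * D (h * sg y y le_rfl) := hD _ _
        _ = _ := by rw [hD h (sg y y le_rfl)]
    have E := congrArg (fun t : IncidenceAlgebra R X => t x y) elem
    simp only [IncidenceAlgebra.constSMul_apply, smul_eq_mul, IncidenceAlgebra.add_apply,
      sg_same_mul_apply_self, mul_sg_same_apply_self] at E
    have T1 : (D (sg x x le_rfl) * (h * sg y y le_rfl) : IncidenceAlgebra R X) x y
        = -((g * h : IncidenceAlgebra R X) x y) := by
      rw [IncidenceAlgebra.mul_apply, IncidenceAlgebra.mul_apply, ← Finset.sum_neg_distrib]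
      refine Finset.sum_congr rfl fun z _ => ?_
      rw [mul_sg_same_apply_self, gapp]
      ring
    have T2 : (h * D (sg y y le_rfl) : IncidenceAlgebra R X) x y
        = (h * g : IncidenceAlgebra R X) x y := by
      rw [IncidenceAlgebra.mul_apply, IncidenceAlgebra.mul_apply]
      refine Finset.sum_congr rfl fun z hz => ?_
      rw [hgy z y (mem_Icc.mp hz).2]
    rw [T1, T2] at E
    linear_combination -E
  -- Step 5 : the transitive map associated to `D`
  have htrans : ∀ i j k : X, i ≤ j → j ≤ k →
      (if hij : i ≤ j then D (sg i j hij) i j else 0)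
        + (if hjk : j ≤ k then D (sg j k hjk) j k else 0)
        = if hik : i ≤ k then D (sg i k hik) i k else 0 := by
    intro i j k hij hjk
    rw [dif_pos hij, dif_pos hjk, dif_pos (hij.trans hjk)]
    have h1 := hD (sg i j hij) (sg j k hjk)
    rw [sg_mul_sg i j k hij hjk] at h1
    have h2 := congrArg (fun t : IncidenceAlgebra R X => t i k) h1
    simp only [IncidenceAlgebra.add_apply] at h2
    rw [mul_sg_apply _ j k hjk i hij, sg_mul_apply i j hij _ k hjk] at h2
    linear_combination -h2
  obtain ⟨σ, hσ⟩ := H (fun i j => if hij : i ≤ j then D (sg i j hij) i j else 0) htrans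
  have fσ : ∀ (i j : X) (hij : i ≤ j), D (sg i j hij) i j = σ i - σ j := by
    intro i j hij
    have := hσ i j hij
    rwa [dif_pos hij] at this
  -- Step 6 : conclude
  set g' : IncidenceAlgebra R X :=
    ⟨fun x y => if x = y then σ x else 0, fun x y hxy => by
      rw [if_neg (fun h : x = y => hxy (h ▸ le_rfl))]⟩ with hg'def
  have g'app : ∀ x y : X, g' x y = if x = y then σ x else 0 := fun x y => rfl
  refine ⟨g + g', fun h => ?_⟩
  ext x y hxy
  rw [key h x y hxy, IncidenceAlgebra.sub_apply]
  have hg'h : ((g' * h : IncidenceAlgebra R X)) x y = σ x * h x y := by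
    rw [IncidenceAlgebra.mul_apply]
    have hterm : ∀ z ∈ Icc x y, g' x z * h z y = if x = z then σ x * h z y else 0 :=
      fun z _ => by rw [g'app, ite_mul, zero_mul]
    rw [Finset.sum_congr rfl hterm,
      Finset.sum_ite_eq (Icc x y) x (fun z => σ x * h z y)]
    simp [mem_Icc, hxy]
  have hhg' : ((h * g' : IncidenceAlgebra R X)) x y = h x y * σ y := by
    rw [IncidenceAlgebra.mul_apply]
    have hterm : ∀ z ∈ Icc x y, h x z * g' z y = if z = y then h x z * σ z else 0 :=
      fun z _ => by rw [g'app, mul_ite, mul_zero]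
    rw [Finset.sum_congr rfl hterm,
      Finset.sum_ite_eq' (Icc x y) y (fun z => h x z * σ z)]
    simp [mem_Icc, hxy]
  have exp1 : (((g + g') * h : IncidenceAlgebra R X)) x y
      = (g * h : IncidenceAlgebra R X) x y + σ x * h x y := by
    rw [add_mul, IncidenceAlgebra.add_apply, hg'h]
  have exp2 : ((h * (g + g') : IncidenceAlgebra R X)) x y
      = (h * g : IncidenceAlgebra R X) x y + h x y * σ y := by
    rw [mul_add, IncidenceAlgebra.add_apply, hhg']
  rw [exp1, exp2, fσ x y hxy]
  ring

end IncAux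

/-- Every derivation of the incidence algebra `I(X,R)` is inner if and only if
every transitive mapping `f` (with `f(i,j) + f(j,k) = f(i,k)` for `i ≤ j ≤ k`) is trivial,
i.e. of the form `f(i,j) = σ(i) − σ(j)` for some `σ : X → R`. -/
theorem every_derivation_inner_iff_every_transitive_trivial {R X : Type*} [CommRing R]
    [Preorder X] [LocallyFiniteOrder X] [DecidableEq X] :
    (∀ D : IncidenceAlgebra R X →ₗ[R] IncidenceAlgebra R X,
        (∀ f g : IncidenceAlgebra R X, D (f * g) = D f * g + f * D g) →
        ∃ g : IncidenceAlgebra R X, ∀ h : IncidenceAlgebra R X, D h = g * h - h * g) ↔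
      (∀ f : X → X → R, (∀ i j k : X, i ≤ j → j ≤ k → f i j + f j k = f i k) →
        ∃ σ : X → R, ∀ i j : X, i ≤ j → f i j = σ i - σ j) := by
  exact ⟨fun hInner => IncAux.mp_dir hInner, fun H D hD => IncAux.mpr_dir H D hD⟩
end

section
/- Let R be a commutative ring with identity and X a locally finite preordered set. Then every local derivation of the incidence algebra I(X,R) is a derivation; that is, if D : I(X,R) → I(X,R) is an R-linear map such that for every a ∈ I(X,R) there exists a derivation D_a of I(X,R) with D(a) = D_a(a), then D itself is a derivation. -/
open Finset
open scoped Classical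
set_option linter.unusedSectionVars false

namespace LocalDerIA

variable {R X : Type*} [CommRing R] [Preorder X] [LocallyFiniteOrder X] [DecidableEq X]

/-- Matrix unit of the incidence algebra: `1` at `(x,y)` if `x ≤ y`, `0` elsewhere. -/
noncomputable def E (R : Type*) [CommRing R] {X : Type*} [Preorder X] [DecidableEq X] (x y : X) :
    IncidenceAlgebra R X :=
  ⟨fun u v => if u = x ∧ v = y ∧ x ≤ y then 1 else 0, fun u v h => by
    rw [if_neg]
    rintro ⟨rfl, rfl, hxy⟩
    exact h hxy⟩

@[simp] lemma E_apply (x y u v : X) :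
    (E R x y) u v = if u = x ∧ v = y ∧ x ≤ y then 1 else 0 := rfl

lemma E_eq_zero_of_not_le {x y : X} (h : ¬ x ≤ y) : (E R x y) = 0 := by
  ext u v _
  simp only [E_apply, IncidenceAlgebra.zero_apply]
  rw [if_neg]
  rintro ⟨-, -, hxy⟩
  exact h hxy

lemma mulE (f : IncidenceAlgebra R X) (x y u v : X) :
    (f * E R x y) u v = if v = y ∧ u ≤ x ∧ x ≤ y then f u x else 0 := by
  rw [IncidenceAlgebra.mul_apply]
  have h1 : ∀ z ∈ Icc u v, f u z * (E R x y) z v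
      = if z = x then (if v = y ∧ x ≤ y then f u x else 0) else 0 := by
    intro z hz
    by_cases hzx : z = x
    · subst hzx
      simp only [E_apply, if_pos rfl, true_and]
      split_ifs <;> simp
    · simp [E_apply, hzx]
  rw [Finset.sum_congr rfl h1, Finset.sum_ite_eq' (Icc u v) x _]
  simp only [Finset.mem_Icc]
  by_cases hg : v = y ∧ u ≤ x ∧ x ≤ y
  · obtain ⟨rfl, hux, hxy⟩ := hg
    rw [if_pos ⟨hux, hxy⟩, if_pos ⟨rfl, hxy⟩, if_pos ⟨rfl, hux, hxy⟩]
  · rw [if_neg hg]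
    split_ifs with h2 h3
    · exact absurd ⟨h3.1, h2.1, h3.2⟩ hg
    · rfl
    · rfl

lemma Emul (f : IncidenceAlgebra R X) (x y u v : X) :
    (E R x y * f) u v = if u = x ∧ y ≤ v ∧ x ≤ y then f y v else 0 := by
  rw [IncidenceAlgebra.mul_apply]
  have h1 : ∀ z ∈ Icc u v, (E R x y) u z * f z v
      = if z = y then (if u = x ∧ x ≤ y then f y v else 0) else 0 := by
    intro z hz
    by_cases hzy : z = y
    · subst hzy
      simp only [E_apply]
      by_cases h2 : u = x ∧ x ≤ z
      · obtain ⟨rfl, hxz⟩ := h2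
        simp [hxz]
      · rw [if_neg (by rintro ⟨ha, -, hb⟩; exact h2 ⟨ha, hb⟩), zero_mul]
        simp [h2]
    · simp [E_apply, hzy]
  rw [Finset.sum_congr rfl h1, Finset.sum_ite_eq' (Icc u v) y _]
  simp only [Finset.mem_Icc]
  by_cases hg : u = x ∧ y ≤ v ∧ x ≤ y
  · obtain ⟨rfl, hyv, hxy⟩ := hg
    rw [if_pos ⟨hxy, hyv⟩, if_pos ⟨rfl, hxy⟩, if_pos ⟨rfl, hyv, hxy⟩]
  · rw [if_neg hg]
    split_ifs with h2 h3
    · exact absurd ⟨h3.1, h2.2, h3.2⟩ hg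
    · rfl
    · rfl


lemma E_mul_E_self_left (x y : X) : E R x x * E R x y = E R x y := by
  ext u v _
  simp only [Emul, E_apply, le_refl, and_true]
  by_cases g : u = x ∧ v = y ∧ x ≤ y
  · obtain ⟨rfl, rfl, hxy⟩ := g
    simp [hxy]
  · rw [if_neg g]
    split_ifs with h2 h3
    · exact absurd ⟨h2.1, h3.2.1, h3.2.2⟩ g
    · rfl
    · rfl

lemma E_mul_E_self_right (x y : X) : E R x y * E R y y = E R x y := by
  ext u v _
  simp only [mulE, E_apply, le_refl, and_true]
  by_cases g : u = x ∧ v = y ∧ x ≤ y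
  · obtain ⟨rfl, rfl, hxy⟩ := g
    simp [hxy]
  · rw [if_neg g]
    split_ifs with h2 h3
    · exact absurd ⟨h3.1, h2.1, h3.2.2⟩ g
    · rfl
    · rfl

lemma E_mul_E {x z y : X} (hxz : x ≤ z) (hzy : z ≤ y) : E R x z * E R z y = E R x y := by
  ext u v _
  simp only [Emul, E_apply]
  by_cases g : u = x ∧ v = y ∧ x ≤ y
  · obtain ⟨rfl, rfl, hxy⟩ := g
    simp [hxz, hzy, hxy]
  · rw [if_neg g]
    split_ifs with h2 h3
    · exact absurd ⟨h2.1, h3.2.1, hxz.trans hzy⟩ g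
    · rfl
    · rfl

lemma E_mul_E_diag_ne {x z : X} (h : x ≠ z) : E R x x * E R z z = (0 : IncidenceAlgebra R X) := by
  ext u v _
  simp only [Emul, E_apply, IncidenceAlgebra.zero_apply]
  split_ifs with h2 h3
  · exact absurd h3.1 h
  · rfl
  · rfl

lemma EfE (f : IncidenceAlgebra R X) (x y : X) :
    E R x x * f * E R y y = f x y • E R x y := by
  ext u v _
  rw [IncidenceAlgebra.constSMul_apply, E_apply, mulE]
  by_cases g : u = x ∧ v = y ∧ x ≤ y
  · obtain ⟨rfl, rfl, hxy⟩ := g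
    rw [if_pos ⟨rfl, hxy, le_rfl⟩, Emul, if_pos ⟨rfl, hxy, le_rfl⟩,
      if_pos ⟨rfl, rfl, hxy⟩, smul_eq_mul, mul_one]
  · rw [if_neg g, smul_zero]
    split_ifs with h2
    · rw [Emul]
      obtain ⟨hv, huy, -⟩ := h2
      rw [if_neg]
      rintro ⟨rfl, hxy, -⟩
      exact g ⟨rfl, hv, hxy⟩
    · rfl

section Derivation

variable (d : IncidenceAlgebra R X →ₗ[R] IncidenceAlgebra R X)
  (hd : ∀ f g : IncidenceAlgebra R X, d (f * g) = d f * g + f * d g)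

include hd

lemma dS1 (x y u v : X) :
    d (E R x y) u v = (if v = y ∧ u ≤ x ∧ x ≤ y then d (E R x x) u x else 0)
      + (if u = x ∧ x ≤ v then d (E R x y) x v else 0) := by
  have h := hd (E R x x) (E R x y)
  rw [E_mul_E_self_left] at h
  have h2 := congrArg (fun t : IncidenceAlgebra R X => t u v) h
  simp only [IncidenceAlgebra.add_apply, mulE, Emul, le_refl, and_true] at h2
  exact h2

lemma dS2 (x y u v : X) :
    d (E R x y) u v = (if v = y ∧ u ≤ y then d (E R x y) u y else 0)
      + (if u = x ∧ y ≤ v ∧ x ≤ y then d (E R y y) y v else 0) := by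
  have h := hd (E R x y) (E R y y)
  rw [E_mul_E_self_right] at h
  have h2 := congrArg (fun t : IncidenceAlgebra R X => t u v) h
  simp only [IncidenceAlgebra.add_apply, mulE, Emul, le_refl, and_true] at h2
  exact h2

lemma dA2 (x : X) : d (E R x x) x x = 0 := by
  have h := dS1 d hd x x x x
  rw [if_pos ⟨rfl, le_refl x, le_refl x⟩, if_pos ⟨rfl, le_refl x⟩] at h
  linear_combination -h

lemma dC1 {x y u v : X} (hu : u ≠ x) (hv : v ≠ y) : d (E R x y) u v = 0 := by
  have h := dS1 d hd x y u v
  rw [if_neg (fun hh => hv hh.1), if_neg (fun hh => hu hh.1), add_zero] at h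
  exact h

lemma dC2 {x y u : X} (hxy : x ≤ y) (hu : u ≠ x) :
    d (E R x y) u y = d (E R x x) u x := by
  have h := dS1 d hd x y u y
  rw [if_neg (fun hh : u = x ∧ x ≤ y => hu hh.1), add_zero] at h
  by_cases hux : u ≤ x
  · rw [if_pos ⟨rfl, hux, hxy⟩] at h
    exact h
  · rw [if_neg (fun hh => hux hh.2.1)] at h
    rw [h, IncidenceAlgebra.apply_eq_zero_of_not_le hux]

lemma dC3 {x y v : X} (hxy : x ≤ y) (hv : v ≠ y) :
    d (E R x y) x v = d (E R y y) y v := by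
  have h := dS2 d hd x y x v
  rw [if_neg (fun hh => hv hh.1), zero_add] at h
  by_cases hyv : y ≤ v
  · rw [if_pos ⟨rfl, hyv, hxy⟩] at h
    exact h
  · rw [if_neg (fun hh => hyv hh.2.1)] at h
    rw [h, IncidenceAlgebra.apply_eq_zero_of_not_le hyv]

lemma dC5 {x z y : X} (hxz : x ≤ z) (hzy : z ≤ y) :
    d (E R x y) x y = d (E R x z) x z + d (E R z y) z y := by
  have h := hd (E R x z) (E R z y)
  rw [E_mul_E hxz hzy] at h
  have h2 := congrArg (fun t : IncidenceAlgebra R X => t x y) h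
  simp only [IncidenceAlgebra.add_apply, mulE, Emul] at h2
  rw [if_pos ⟨trivial, hxz, hzy⟩, if_pos ⟨trivial, hzy, hxz⟩] at h2
  exact h2

lemma dL4 {x z : X} (hne : x ≠ z) :
    d (E R x x) x z + d (E R z z) x z = 0 := by
  have h := hd (E R x x) (E R z z)
  rw [E_mul_E_diag_ne hne, map_zero] at h
  have h2 : (0 : R) = (d (E R x x) * E R z z) x z + (E R x x * d (E R z z)) x z :=
    congrArg (fun t : IncidenceAlgebra R X => t x z) h
  rw [mulE, Emul] at h2
  by_cases hxz : x ≤ z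
  · rw [if_pos ⟨rfl, hxz, le_rfl⟩, if_pos ⟨rfl, hxz, le_rfl⟩] at h2
    exact h2.symm
  · rw [IncidenceAlgebra.apply_eq_zero_of_not_le hxz, IncidenceAlgebra.apply_eq_zero_of_not_le hxz,
      add_zero]

end Derivation


section Local

variable (D : IncidenceAlgebra R X →ₗ[R] IncidenceAlgebra R X)
  (hD : ∀ a : IncidenceAlgebra R X,
    ∃ Da : IncidenceAlgebra R X →ₗ[R] IncidenceAlgebra R X,
      (∀ f g : IncidenceAlgebra R X, Da (f * g) = Da f * g + f * Da g) ∧ D a = Da a)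

include hD

lemma lA2 (x : X) : D (E R x x) x x = 0 := by
  obtain ⟨d, hd, he⟩ := hD (E R x x)
  rw [he]
  exact dA2 d hd x

lemma lC1 {x y u v : X} (hu : u ≠ x) (hv : v ≠ y) : D (E R x y) u v = 0 := by
  obtain ⟨d, hd, he⟩ := hD (E R x y)
  rw [he]
  exact dC1 d hd hu hv

lemma lR0 {x z : X} (hne : x ≠ z) : D (E R x x) x z + D (E R z z) x z = 0 := by
  obtain ⟨d, hd, he⟩ := hD (E R x x + E R z z)
  have h1 : D (E R x x) + D (E R z z) = d (E R x x) + d (E R z z) := by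
    rw [← map_add, ← map_add, he]
  have h2 := congrArg (fun t : IncidenceAlgebra R X => t x z) h1
  simp only [IncidenceAlgebra.add_apply] at h2
  rw [h2]
  exact dL4 d hd hne

lemma lR1 {x y u : X} (hxy : x ≤ y) (hne : x ≠ y) (hu : u ≠ x) :
    D (E R x y) u y = D (E R x x) u x := by
  obtain ⟨d, hd, he⟩ := hD (E R x x + E R x y)
  have h1 : D (E R x x) + D (E R x y) = d (E R x x) + d (E R x y) := by
    rw [← map_add, ← map_add, he]
  have key : ∀ a b : X, D (E R x x) a b + D (E R x y) a b = d (E R x x) a b + d (E R x y) a b := by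
    intro a b
    have h2 := congrArg (fun t : IncidenceAlgebra R X => t a b) h1
    simpa only [IncidenceAlgebra.add_apply] using h2
  have e1 := key u y
  rw [lC1 D hD hu (Ne.symm hne), dC1 d hd hu (Ne.symm hne), dC2 d hd hxy hu, zero_add,
    zero_add] at e1
  have e2 := key u x
  rw [lC1 D hD hu hne, dC1 d hd hu hne, add_zero, add_zero] at e2
  rw [e1, e2]

lemma lR2 {x y v : X} (hxy : x ≤ y) (hne : x ≠ y) (hv : v ≠ y) :
    D (E R x y) x v = D (E R y y) y v := by
  obtain ⟨d, hd, he⟩ := hD (E R y y + E R x y)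
  have h1 : D (E R y y) + D (E R x y) = d (E R y y) + d (E R x y) := by
    rw [← map_add, ← map_add, he]
  have key : ∀ a b : X, D (E R y y) a b + D (E R x y) a b = d (E R y y) a b + d (E R x y) a b := by
    intro a b
    have h2 := congrArg (fun t : IncidenceAlgebra R X => t a b) h1
    simpa only [IncidenceAlgebra.add_apply] using h2
  have e1 := key x v
  rw [lC1 D hD hne hv, dC1 d hd hne hv, dC3 d hd hxy hv, zero_add, zero_add] at e1
  have e2 := key y v
  rw [lC1 D hD (Ne.symm hne) hv, dC1 d hd (Ne.symm hne) hv, add_zero, add_zero] at e2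
  rw [e1, e2]

lemma lsAdd {x z y : X} (hxz : x ≤ z) (hzy : z ≤ y) :
    D (E R x y) x y = D (E R x z) x z + D (E R z y) z y := by
  by_cases hxz0 : x = z
  · subst hxz0
    rw [lA2 D hD, zero_add]
  by_cases hzy0 : z = y
  · subst hzy0
    rw [lA2 D hD, add_zero]
  by_cases hxy0 : x = y
  · -- cyclic case `x ≤ z ≤ x`
    subst hxy0
    rw [lA2 D hD]
    obtain ⟨d, hd, he⟩ := hD (E R x z + E R z x)
    have h1 : D (E R x z) + D (E R z x) = d (E R x z) + d (E R z x) := by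
      rw [← map_add, ← map_add, he]
    have key : ∀ a b : X,
        D (E R x z) a b + D (E R z x) a b = d (E R x z) a b + d (E R z x) a b := by
      intro a b
      have h2 := congrArg (fun t : IncidenceAlgebra R X => t a b) h1
      simpa only [IncidenceAlgebra.add_apply] using h2
    have e1 := key x z
    rw [lC1 D hD hxz0 (Ne.symm hxz0), dC1 d hd hxz0 (Ne.symm hxz0), add_zero, add_zero] at e1
    have e2 := key z x
    rw [lC1 D hD (Ne.symm hxz0) hxz0, dC1 d hd (Ne.symm hxz0) hxz0, zero_add, zero_add] at e2
    have e3 := dC5 d hd hxz hzy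
    have e4 := dA2 d hd x
    linear_combination -e1 - e2 + e3 - e4
  · -- generic case: `x, z, y` pairwise distinct
    have hxy : x ≤ y := hxz.trans hzy
    obtain ⟨d, hd, he⟩ := hD (E R z z + E R x z + E R z y + E R x y)
    have h1 : D (E R z z) + D (E R x z) + D (E R z y) + D (E R x y)
        = d (E R z z) + d (E R x z) + d (E R z y) + d (E R x y) := by
      rw [← map_add, ← map_add, ← map_add, ← map_add, ← map_add, ← map_add, he]
    have key : ∀ a b : X,
        D (E R z z) a b + D (E R x z) a b + D (E R z y) a b + D (E R x y) a b
          = d (E R z z) a b + d (E R x z) a b + d (E R z y) a b + d (E R x y) a b := by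
      intro a b
      have h2 := congrArg (fun t : IncidenceAlgebra R X => t a b) h1
      simpa only [IncidenceAlgebra.add_apply] using h2
    have E1 := key x z
    rw [lC1 D hD hxz0 hzy0, dC1 d hd hxz0 hzy0,
      lR2 D hD hxy hxy0 hzy0, dC3 d hd hxy hzy0] at E1
    have E2 := key z y
    rw [lC1 D hD (Ne.symm hxz0) (Ne.symm hzy0), dC1 d hd (Ne.symm hxz0) (Ne.symm hzy0),
      lR1 D hD hxy hxy0 (Ne.symm hxz0), dC2 d hd hxy (Ne.symm hxz0)] at E2
    have E3 := key x y
    rw [lC1 D hD hxz0 (Ne.symm hzy0), dC1 d hd hxz0 (Ne.symm hzy0),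
      lR2 D hD hxz hxz0 (Ne.symm hzy0), dC3 d hd hxz (Ne.symm hzy0),
      lR1 D hD hzy hzy0 hxz0, dC2 d hd hzy hxz0,
      dC5 d hd hxz hzy] at E3
    have E5 := key z z
    rw [lA2 D hD, dA2 d hd,
      lR1 D hD hxz hxz0 (Ne.symm hxz0), dC2 d hd hxz (Ne.symm hxz0),
      lR2 D hD hzy hzy0 hzy0, dC3 d hd hzy hzy0,
      lC1 D hD (Ne.symm hxz0) hzy0, dC1 d hd (Ne.symm hxz0) hzy0] at E5
    linear_combination -E1 - E2 + E3 + E5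

end Local


/-! ### The candidate derivation -/

section Candidate

variable (D : IncidenceAlgebra R X →ₗ[R] IncidenceAlgebra R X)

/-- The element implementing the inner part of `D`. -/
noncomputable def hel : IncidenceAlgebra R X :=
  ⟨fun u v => if u = v then 0 else D (E R v v) u v, fun u v h => by
    rw [if_neg (fun huv => h (le_of_eq huv)), IncidenceAlgebra.apply_eq_zero_of_not_le h]⟩

lemma hel_apply (u v : X) : hel D u v = if u = v then 0 else D (E R v v) u v := rfl

/-- The diagonal (transitivity-function) part of `D`. -/
noncomputable def sf (x y : X) : R := D (E R x y) x y

/-- Pointwise multiplication by the function `sf D`. -/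
noncomputable def pm (f : IncidenceAlgebra R X) : IncidenceAlgebra R X :=
  ⟨fun u v => sf D u v * f u v, fun u v h => by
    rw [IncidenceAlgebra.apply_eq_zero_of_not_le h, mul_zero]⟩

lemma pm_apply (f : IncidenceAlgebra R X) (u v : X) : pm D f u v = sf D u v * f u v := rfl

/-- The candidate derivation. -/
noncomputable def TL : IncidenceAlgebra R X →ₗ[R] IncidenceAlgebra R X where
  toFun f := hel D * f - f * hel D + pm D f
  map_add' f g := by
    ext u v _
    simp only [IncidenceAlgebra.add_apply, IncidenceAlgebra.sub_apply, pm_apply,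
      IncidenceAlgebra.mul_apply, mul_add, add_mul, Finset.sum_add_distrib]
    ring
  map_smul' c f := by
    ext u v _
    simp only [RingHom.id_apply, IncidenceAlgebra.constSMul_apply, IncidenceAlgebra.add_apply,
      IncidenceAlgebra.sub_apply, pm_apply, IncidenceAlgebra.mul_apply, smul_eq_mul]
    have h1 : ∀ z ∈ Icc u v, hel D u z * (c * f z v) = c * (hel D u z * f z v) :=
      fun z _ => by ring
    have h2 : ∀ z ∈ Icc u v, c * f u z * hel D z v = c * (f u z * hel D z v) :=
      fun z _ => by ring
    rw [Finset.sum_congr rfl h1, Finset.sum_congr rfl h2, ← Finset.mul_sum, ← Finset.mul_sum]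
    ring

lemma TL_apply (f : IncidenceAlgebra R X) (u v : X) :
    TL D f u v = (hel D * f) u v - (f * hel D) u v + sf D u v * f u v := rfl

end Candidate


lemma sum_apply {ι : Type*} (s : Finset ι) (g : ι → IncidenceAlgebra R X) (a b : X) :
    (∑ i ∈ s, g i) a b = ∑ i ∈ s, g i a b := by
  induction s using Finset.cons_induction with
  | empty => simp [IncidenceAlgebra.zero_apply]
  | cons i s his ih => rw [Finset.sum_cons, Finset.sum_cons, IncidenceAlgebra.add_apply, ih]

lemma f1_apply (f : IncidenceAlgebra R X) (S : Finset X) {u v : X} (hu : u ∈ S) (hv : v ∈ S) :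
    (∑ p ∈ S ×ˢ S, f p.1 p.2 • E R p.1 p.2) u v = f u v := by
  rw [sum_apply]
  by_cases huv : u ≤ v
  · rw [Finset.sum_eq_single_of_mem (u, v) (Finset.mem_product.2 ⟨hu, hv⟩)]
    · rw [IncidenceAlgebra.constSMul_apply, E_apply, if_pos ⟨rfl, rfl, huv⟩, smul_eq_mul, mul_one]
    · rintro ⟨p, q⟩ hp hne
      rw [IncidenceAlgebra.constSMul_apply, E_apply, if_neg, smul_zero]
      rintro ⟨rfl, rfl, -⟩
      exact hne rfl
  · rw [IncidenceAlgebra.apply_eq_zero_of_not_le huv f]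
    refine Finset.sum_eq_zero fun p hp => ?_
    rw [IncidenceAlgebra.constSMul_apply, E_apply, if_neg, smul_zero]
    rintro ⟨rfl, rfl, h⟩
    exact huv h

section Main

variable (D : IncidenceAlgebra R X →ₗ[R] IncidenceAlgebra R X)
  (hD : ∀ a : IncidenceAlgebra R X,
    ∃ Da : IncidenceAlgebra R X →ₗ[R] IncidenceAlgebra R X,
      (∀ f g : IncidenceAlgebra R X, Da (f * g) = Da f * g + f * Da g) ∧ D a = Da a)

include hD

lemma lDE (u v : X) : D (E R u v) = TL D (E R u v) := by
  by_cases huv : u ≤ v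
  · ext a b _
    rw [TL_apply, mulE, Emul, E_apply]
    by_cases hau : a = u
    · subst hau
      by_cases hbv : b = v
      · subst hbv
        rw [if_pos ⟨rfl, le_rfl, huv⟩, if_pos ⟨rfl, le_rfl, huv⟩, if_pos ⟨rfl, rfl, huv⟩,
          hel_apply, hel_apply, if_pos rfl, if_pos rfl, mul_one]
        show D (E R a b) a b = 0 - 0 + sf D a b
        show D (E R a b) a b = 0 - 0 + D (E R a b) a b
        ring
      · rw [if_neg (fun hh => hbv hh.1), if_neg (fun hh : a = a ∧ b = v ∧ a ≤ v => hbv hh.2.1),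
          mul_zero, add_zero]
        by_cases hvb : v ≤ b
        · rw [if_pos ⟨rfl, hvb, huv⟩, hel_apply, if_neg (fun hh => hbv hh.symm)]
          by_cases huv0 : a = v
          · subst huv0
            have := lR0 D hD (fun hh => hbv hh.symm : a ≠ b)
            linear_combination this
          · rw [lR2 D hD huv huv0 hbv]
            have := lR0 D hD (fun hh => hbv hh.symm : v ≠ b)
            linear_combination this
        · rw [if_neg (fun hh : a = a ∧ v ≤ b ∧ a ≤ v => hvb hh.2.1)]
          by_cases huv0 : a = v
          · subst huv0
            rw [IncidenceAlgebra.apply_eq_zero_of_not_le hvb]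
            ring
          · rw [lR2 D hD huv huv0 hbv, IncidenceAlgebra.apply_eq_zero_of_not_le hvb]
            ring
    · by_cases hbv : b = v
      · subst hbv
        rw [if_neg (fun hh : a = u ∧ b ≤ b ∧ u ≤ b => hau hh.1),
          if_neg (fun hh : a = u ∧ b = b ∧ u ≤ b => hau hh.1), mul_zero, add_zero, sub_zero]
        by_cases haub : a ≤ u
        · rw [if_pos ⟨rfl, haub, huv⟩, hel_apply, if_neg hau]
          by_cases huv0 : u = b
          · subst huv0
            rfl
          · exact lR1 D hD huv huv0 hau
        · rw [if_neg (fun hh : b = b ∧ a ≤ u ∧ u ≤ b => haub hh.2.1)]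
          by_cases huv0 : u = b
          · subst huv0
            exact IncidenceAlgebra.apply_eq_zero_of_not_le haub _
          · rw [lR1 D hD huv huv0 hau]
            exact IncidenceAlgebra.apply_eq_zero_of_not_le haub _
      · rw [if_neg (fun hh : b = v ∧ a ≤ u ∧ u ≤ v => hbv hh.1),
          if_neg (fun hh : a = u ∧ v ≤ b ∧ u ≤ v => hau hh.1),
          if_neg (fun hh : a = u ∧ b = v ∧ u ≤ v => hau hh.1), mul_zero, add_zero, sub_zero]
        exact lC1 D hD hau hbv
  · rw [E_eq_zero_of_not_le huv, map_zero, map_zero]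

lemma lDf (f : IncidenceAlgebra R X) (x y : X) (hxy : x ≤ y) : D f x y = TL D f x y := by
  set S := Icc x y with hS
  set f1 : IncidenceAlgebra R X := ∑ p ∈ S ×ˢ S, f p.1 p.2 • E R p.1 p.2 with hf1def
  have hxS : x ∈ S := by rw [hS, Finset.mem_Icc]; exact ⟨le_rfl, hxy⟩
  have hyS : y ∈ S := by rw [hS, Finset.mem_Icc]; exact ⟨hxy, le_rfl⟩
  have hDT1 : D f1 = TL D f1 := by
    rw [hf1def, map_sum, map_sum]
    exact Finset.sum_congr rfl fun p _ => by rw [map_smul, map_smul, lDE D hD]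
  have hf2 : ∀ u v : X, u ∈ S → v ∈ S → (f - f1) u v = 0 := by
    intro u v hu hv
    rw [IncidenceAlgebra.sub_apply, hf1def, f1_apply f S hu hv, sub_self]
  have hDf2 : D (f - f1) x y = 0 := by
    obtain ⟨d, hd, he⟩ := hD (f - f1)
    rw [he]
    have hk : E R x x * (f - f1) * E R y y = 0 := by
      rw [EfE, hf2 x y hxS hyS, zero_smul]
    have h3 : (0 : IncidenceAlgebra R X)
        = d (E R x x) * (f - f1) * E R y y + E R x x * d (f - f1) * E R y y
          + E R x x * (f - f1) * d (E R y y) := by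
      have h0 := hd (E R x x * (f - f1)) (E R y y)
      rw [hk, map_zero, hd (E R x x) (f - f1), add_mul] at h0
      exact h0
    have h4 := congrArg (fun t : IncidenceAlgebra R X => t x y) h3
    simp only [IncidenceAlgebra.add_apply, IncidenceAlgebra.zero_apply] at h4
    have t1 : (d (E R x x) * (f - f1) * E R y y) x y = 0 := by
      rw [mulE, if_pos ⟨rfl, hxy, le_rfl⟩, IncidenceAlgebra.mul_apply]
      refine Finset.sum_eq_zero fun z hz => ?_
      rw [hf2 z y hz hyS, mul_zero]
    have t2 : (E R x x * d (f - f1) * E R y y) x y = d (f - f1) x y := by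
      rw [mulE, if_pos ⟨rfl, hxy, le_rfl⟩, Emul, if_pos ⟨rfl, hxy, le_rfl⟩]
    have t3 : (E R x x * (f - f1) * d (E R y y)) x y = 0 := by
      rw [IncidenceAlgebra.mul_apply]
      refine Finset.sum_eq_zero fun z hz => ?_
      rw [Emul]
      rw [Finset.mem_Icc] at hz
      rw [if_pos ⟨rfl, hz.1, le_rfl⟩, hf2 x z hxS (by rw [hS, Finset.mem_Icc]; exact hz),
        zero_mul]
    rw [t1, t2, t3, zero_add, add_zero] at h4
    exact h4.symm
  have hTf2 : TL D (f - f1) x y = 0 := by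
    rw [TL_apply]
    have u1 : (hel D * (f - f1)) x y = 0 := by
      rw [IncidenceAlgebra.mul_apply]
      refine Finset.sum_eq_zero fun z hz => ?_
      rw [hf2 z y hz hyS, mul_zero]
    have u2 : ((f - f1) * hel D) x y = 0 := by
      rw [IncidenceAlgebra.mul_apply]
      refine Finset.sum_eq_zero fun z hz => ?_
      rw [Finset.mem_Icc] at hz
      rw [hf2 x z hxS (by rw [hS, Finset.mem_Icc]; exact hz), zero_mul]
    rw [u1, u2, hf2 x y hxS hyS, mul_zero]
    ring
  have hre : f1 + (f - f1) = f := by abel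
  calc D f x y = D f1 x y + D (f - f1) x y := by
        rw [← IncidenceAlgebra.add_apply, ← map_add, hre]
    _ = TL D f1 x y + TL D (f - f1) x y := by rw [hDT1, hDf2, hTf2]
    _ = TL D f x y := by rw [← IncidenceAlgebra.add_apply, ← map_add, hre]

lemma pm_mul (f g : IncidenceAlgebra R X) :
    pm D (f * g) = pm D f * g + f * pm D g := by
  ext a b hab
  simp only [pm_apply, IncidenceAlgebra.add_apply, IncidenceAlgebra.mul_apply]
  rw [Finset.mul_sum, ← Finset.sum_add_distrib]
  refine Finset.sum_congr rfl fun z hz => ?_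
  rw [Finset.mem_Icc] at hz
  have hs : sf D a b = sf D a z + sf D z b := lsAdd D hD hz.1 hz.2
  rw [hs]
  ring

end Main

lemma TL_def (D : IncidenceAlgebra R X →ₗ[R] IncidenceAlgebra R X)
    (f : IncidenceAlgebra R X) : TL D f = hel D * f - f * hel D + pm D f := rfl

end LocalDerIA

/-- The incidence algebra `I(X,R)` is a Kadison algebra: every local derivation
of `I(X,R)` (an `R`-linear map `D` such that for every `a` there is a derivation `D_a` with
`D(a) = D_a(a)`) is a derivation. -/
theorem local_derivation_is_derivation {R X : Type*} [CommRing R] [Preorder X]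
    [LocallyFiniteOrder X] [DecidableEq X]
    (D : IncidenceAlgebra R X →ₗ[R] IncidenceAlgebra R X)
    (hD : ∀ a : IncidenceAlgebra R X,
      ∃ Da : IncidenceAlgebra R X →ₗ[R] IncidenceAlgebra R X,
        (∀ f g : IncidenceAlgebra R X, Da (f * g) = Da f * g + f * Da g) ∧ D a = Da a) :
    ∀ f g : IncidenceAlgebra R X, D (f * g) = D f * g + f * D g := by
  intro f g
  have hall : ∀ h : IncidenceAlgebra R X, D h = LocalDerIA.TL D h := fun h =>
    IncidenceAlgebra.ext fun a b hab => LocalDerIA.lDf D hD h a b hab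
  rw [hall (f * g), hall f, hall g, LocalDerIA.TL_def, LocalDerIA.TL_def, LocalDerIA.TL_def,
    LocalDerIA.pm_mul D hD f g]
  noncomm_ring
end

section
/- Let A be a 2-torsion free ring (i.e. 2a = 0 implies a = 0 for a ∈ A) and let D : A → A be a Jordan derivation, i.e. an additive map with D(a²) = D(a)a + aD(a) for all a ∈ A. Then for all a, b ∈ A: D(aba) = D(a)ba + aD(b)a + abD(a). -/
/-- Herstein. If `A` is a 2-torsion free ring and `D : A → A` is a Jordan
derivation, then `D(aba) = D(a)ba + aD(b)a + abD(a)` for all `a, b ∈ A`. -/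
theorem jordan_derivation_apply_mul_mul_self {A : Type*} [Ring A]
    (htf : ∀ a : A, 2 • a = 0 → a = 0) (D : A → A)
    (hadd : ∀ a b : A, D (a + b) = D a + D b)
    (hJ : ∀ a : A, D (a * a) = D a * a + a * D a) :
    ∀ a b : A, D (a * b * a) = D a * b * a + a * D b * a + a * b * D a := by
  have h2 : ∀ x y : A, D (x * y + y * x) = D x * y + x * D y + D y * x + y * D x := by
    intro x y
    have h := hJ (x + y)
    have harg : (x + y) * (x + y) = x * x + (x * y + y * x) + y * y := by noncomm_ring
    rw [harg, hadd, hadd, hJ x, hJ y, hadd x y] at h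
    have e : D (x * y + y * x) =
        ((D x + D y) * (x + y) + (x + y) * (D x + D y))
          - (D x * x + x * D x) - (D y * y + y * D y) := by
      rw [← h]; abel
    rw [e]; noncomm_ring
  intro a b
  have key := h2 a (a * b + b * a)
  have harg2 : a * (a * b + b * a) + (a * b + b * a) * a
      = (a * a * b + b * (a * a)) + (a * b * a + a * b * a) := by noncomm_ring
  rw [harg2, hadd, hadd, hadd (a * b * a)] at key
  have k2 := h2 (a * a) b
  rw [hJ a, hadd (a * a * b)] at k2
  rw [k2, h2 a b] at key
  have e := eq_sub_of_add_eq' key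
  rw [← sub_eq_zero]
  apply htf
  rw [two_smul]
  have e2 : (D (a * b * a) - (D a * b * a + a * D b * a + a * b * D a))
      + (D (a * b * a) - (D a * b * a + a * D b * a + a * b * D a))
      = (D (a * b * a) + D (a * b * a))
        - ((D a * b * a + a * D b * a + a * b * D a)
          + (D a * b * a + a * D b * a + a * b * D a)) := by abel
  rw [e2, e]; noncomm_ring
end

section
/- Let A be a 2-torsion free ring (i.e. 2a = 0 implies a = 0 for a ∈ A) and let D : A → A be a Jordan derivation, i.e. an additive map with D(a²) = D(a)a + aD(a) for all a ∈ A. Then for all a, b, c ∈ A: D(abc + cba) = D(a)bc + aD(b)c + abD(c) + D(c)ba + cD(b)a + cbD(a). -/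
/-- Herstein. If `A` is a 2-torsion free ring and `D : A → A` is a Jordan
derivation, then `D(abc + cba) = D(a)bc + aD(b)c + abD(c) + D(c)ba + cD(b)a + cbD(a)` for all
`a, b, c ∈ A`. -/
theorem jordan_derivation_apply_triple {A : Type*} [Ring A]
    (htf : ∀ a : A, 2 • a = 0 → a = 0) (D : A → A)
    (hadd : ∀ a b : A, D (a + b) = D a + D b)
    (hJ : ∀ a : A, D (a * a) = D a * a + a * D a) :
    ∀ a b c : A, D (a * b * c + c * b * a) =
      D a * b * c + a * D b * c + a * b * D c + D c * b * a + c * D b * a + c * b * D a := by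
  -- linearized Jordan identity
  have h2 : ∀ a b : A, D (a * b + b * a) = D a * b + a * D b + D b * a + b * D a := by
    intro a b
    have e : (a + b) * (a + b) = a * a + (a * b + b * a) + b * b := by noncomm_ring
    have h := hJ (a + b)
    rw [e, hadd (a*a + (a*b+b*a)) (b*b), hadd (a*a) (a*b+b*a), hJ a, hJ b, hadd a b] at h
    have h' : D (a * b + b * a) + (D a * a + a * D a + (D b * b + b * D b)) =
        (D a + D b) * (a + b) + (a + b) * (D a + D b) := by
      rw [← h]; abel
    have := eq_sub_of_add_eq h'
    rw [this]; noncomm_ring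
  -- D(aba) formula
  have h3 : ∀ a b : A, D (a * b * a) = D a * b * a + a * D b * a + a * b * D a := by
    intro a b
    set w := a * b + b * a with hw
    have e : a * w + w * a = (a * a) * b + b * (a * a) + (a * b * a + a * b * a) := by
      rw [hw]; noncomm_ring
    have h := h2 a w
    rw [e, hadd (a*a*b + b*(a*a)) (a*b*a + a*b*a), h2 (a*a) b,
      hadd (a*b*a) (a*b*a)] at h
    rw [← sub_eq_zero]
    apply htf
    have goal2 : D (a * b * a) + D (a * b * a) =
        (D a * b * a + a * D b * a + a * b * D a) + (D a * b * a + a * D b * a + a * b * D a) := by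
      have h' : D (a * b * a) + D (a * b * a) =
          D a * w + a * D w + D w * a + w * D a -
          (D (a*a) * b + (a*a) * D b + D b * (a*a) + b * D (a*a)) := by
        rw [← h]; abel
      rw [h', hw, h2 a b, hJ a]; noncomm_ring
    rw [two_smul, sub_add_sub_comm, goal2, sub_self]
  intro a b c
  have e : (a + c) * b * (a + c) = a * b * a + (a * b * c + c * b * a) + c * b * c := by
    noncomm_ring
  have h := h3 (a + c) b
  rw [e, hadd (a*b*a + (a*b*c+c*b*a)) (c*b*c), hadd (a*b*a) (a*b*c+c*b*a), h3 a b, h3 c b, hadd a c] at h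
  have h' : D (a * b * c + c * b * a) +
      (D a * b * a + a * D b * a + a * b * D a + (D c * b * c + c * D b * c + c * b * D c)) =
      (D a + D c) * b * (a + c) + (a + c) * D b * (a + c) + (a + c) * b * (D a + D c) := by
    rw [← h]; abel
  have := eq_sub_of_add_eq h'
  rw [this]; noncomm_ring
end

section
/- Let R be a 2-torsion free commutative ring with identity (i.e. 2r = 0 implies r = 0 for r ∈ R) and let X be a locally finite preordered set. Then every Jordan derivation of the incidence algebra I(X,R) is a derivation: if D : I(X,R) → I(X,R) is R-linear and satisfies D(f²) = D(f)f + fD(f) for all f ∈ I(X,R), then D(fg) = D(f)g + fD(g) for all f, g ∈ I(X,R). -/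
open Finset IncidenceAlgebra
open scoped Classical
set_option linter.unusedSectionVars false

namespace IncAuxJD15
variable {R X : Type*} [CommRing R] [Preorder X] [LocallyFiniteOrder X] [DecidableEq X]

/-- single matrix unit -/
noncomputable def sng (R : Type*) [CommRing R] {X : Type*} [Preorder X] [DecidableEq X] (p q : X) :
    IncidenceAlgebra R X :=
  ⟨fun s t => if s = p ∧ t = q ∧ p ≤ q then 1 else 0, by
    intro a b h
    simp only [ite_eq_right_iff, one_ne_zero]
    rintro ⟨rfl, rfl, hle⟩
    exact absurd hle h⟩

lemma sng_apply (p q s t : X) :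
    (sng R p q) s t = if s = p ∧ t = q ∧ p ≤ q then 1 else 0 := rfl

lemma mul_sng (f : IncidenceAlgebra R X) {p q : X} (hpq : p ≤ q) (s t : X) :
    (f * sng R p q) s t = if t = q then f s p else 0 := by
  rw [IncidenceAlgebra.mul_apply]
  by_cases htq : t = q
  · subst htq
    by_cases hsp : s ≤ p
    · rw [Finset.sum_eq_single_of_mem p (Finset.mem_Icc.2 ⟨hsp, hpq⟩)
        (fun x _ hxp => by simp [sng_apply, hxp])]
      simp [sng_apply, hpq]
    · rw [if_pos rfl, IncidenceAlgebra.apply_eq_zero_of_not_le hsp]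
      refine Finset.sum_eq_zero fun x hx => ?_
      by_cases hxp : x = p
      · subst hxp; exact absurd (Finset.mem_Icc.1 hx).1 hsp
      · simp [sng_apply, hxp]
  · rw [if_neg htq]
    exact Finset.sum_eq_zero fun x _ => by simp [sng_apply, htq]

lemma sng_mul (f : IncidenceAlgebra R X) {p q : X} (hpq : p ≤ q) (s t : X) :
    (sng R p q * f) s t = if s = p then f q t else 0 := by
  rw [IncidenceAlgebra.mul_apply]
  by_cases hsp : s = p
  · subst hsp
    by_cases hqt : q ≤ t
    · rw [Finset.sum_eq_single_of_mem q (Finset.mem_Icc.2 ⟨hpq, hqt⟩)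
        (fun x _ hxq => by simp [sng_apply, hxq])]
      simp [sng_apply, hpq]
    · rw [if_pos rfl, IncidenceAlgebra.apply_eq_zero_of_not_le hqt]
      refine Finset.sum_eq_zero fun x hx => ?_
      by_cases hxq : x = q
      · subst hxq; exact absurd (Finset.mem_Icc.1 hx).2 hqt
      · simp [sng_apply, hxq]
  · rw [if_neg hsp]
    exact Finset.sum_eq_zero fun x _ => by simp [sng_apply, hsp]

lemma sng_mul_sng {p q u v : X} (hpq : p ≤ q) (huv : u ≤ v) :
    sng R p q * sng R u v = if q = u then sng R p v else 0 := by
  ext s t _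
  rw [sng_mul _ hpq]
  by_cases hqu : q = u
  · subst hqu
    rw [if_pos rfl]
    by_cases hsp : s = p
    · subst hsp
      rw [if_pos rfl, sng_apply, sng_apply]
      by_cases htv : t = v
      · subst htv
        simp [huv, hpq.trans huv]
      · simp [htv]
    · rw [if_neg hsp, sng_apply, if_neg (by tauto), eq_comm]
  · rw [if_neg hqu, IncidenceAlgebra.zero_apply]
    by_cases hsp : s = p
    · rw [if_pos hsp, sng_apply, if_neg (by tauto)]
    · rw [if_neg hsp]

lemma sandwich (f : IncidenceAlgebra R X) (p q : X) :
    sng R p p * f * sng R q q = f p q • sng R p q := by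
  ext s t _
  rw [IncidenceAlgebra.constSMul_apply, mul_sng _ le_rfl, sng_apply]
  by_cases htq : t = q
  · rw [if_pos htq, sng_mul _ le_rfl]
    by_cases hsp : s = p
    · rw [if_pos hsp]
      by_cases hle : p ≤ q
      · rw [if_pos ⟨hsp, htq, hle⟩, smul_eq_mul, mul_one]
      · rw [IncidenceAlgebra.apply_eq_zero_of_not_le hle, if_neg (by tauto), smul_zero]
    · rw [if_neg hsp, if_neg (by tauto), smul_zero]
  · rw [if_neg htq, if_neg (by tauto), smul_zero]

section D
variable {D : IncidenceAlgebra R X →ₗ[R] IncidenceAlgebra R X}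

lemma tf2 (htf : ∀ r : R, 2 • r = 0 → r = 0) (h : IncidenceAlgebra R X)
    (hh : h + h = 0) : h = 0 := by
  ext a b _
  have h2 : h a b + h a b = 0 := by
    have := congrArg (fun F : IncidenceAlgebra R X => F a b) hh
    simpa [IncidenceAlgebra.add_apply] using this
  have := htf (h a b) (by rw [two_smul]; exact h2)
  simpa using this

lemma polar (hD : ∀ f, D (f * f) = D f * f + f * D f) (f g : IncidenceAlgebra R X) :
    D (f * g + g * f) = D f * g + f * D g + D g * f + g * D f := by
  have h := hD (f + g)
  rw [show (f + g) * (f + g) = f * f + (f * g + g * f) + g * g by noncomm_ring] at h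
  rw [map_add, map_add, hD f, hD g] at h
  have h2 : D (f + g) * (f + g) + (f + g) * D (f + g)
      = (D f * f + f * D f) + (D f * g + f * D g + D g * f + g * D f)
        + (D g * g + g * D g) := by rw [map_add]; noncomm_ring
  rw [h2] at h
  exact add_left_cancel (add_right_cancel h)

lemma triple (htf : ∀ r : R, 2 • r = 0 → r = 0)
    (hD : ∀ f, D (f * f) = D f * f + f * D f) (a f : IncidenceAlgebra R X) :
    D (a * f * a) = D a * f * a + a * D f * a + a * f * D a := by
  have h4 := polar hD a f
  have h3 := polar hD (a * a) f
  have h2 := polar hD a (a * f + f * a)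
  rw [show a * (a * f + f * a) + (a * f + f * a) * a
      = (a * a * f + f * (a * a)) + (a * f * a + a * f * a) by noncomm_ring,
    map_add, h3, hD a, map_add, h4] at h2
  have key : (D (a * f * a) - (D a * f * a + a * D f * a + a * f * D a))
      + (D (a * f * a) - (D a * f * a + a * D f * a + a * f * D a)) = 0 := by
    have h6 := sub_eq_zero.2 h2
    rw [← h6]
    simp only [mul_add, add_mul, mul_assoc]
    abel
  have := tf2 htf _ key
  rwa [sub_eq_zero] at this

lemma triple2 (htf : ∀ r : R, 2 • r = 0 → r = 0)
    (hD : ∀ f, D (f * f) = D f * f + f * D f) (a b f : IncidenceAlgebra R X) :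
    D (a * f * b + b * f * a) = D a * f * b + a * D f * b + a * f * D b
      + D b * f * a + b * D f * a + b * f * D a := by
  have h := triple htf hD (a + b) f
  rw [show (a + b) * f * (a + b) = a * f * a + (a * f * b + b * f * a) + b * f * b
      by noncomm_ring, map_add, map_add, triple htf hD a f, triple htf hD b f] at h
  have h2 : D (a + b) * f * (a + b) + (a + b) * D f * (a + b) + (a + b) * f * D (a + b)
      = (D a * f * a + a * D f * a + a * f * D a)
        + (D a * f * b + a * D f * b + a * f * D b
            + D b * f * a + b * D f * a + b * f * D a)
        + (D b * f * b + b * D f * b + b * f * D b) := by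
    rw [map_add]; noncomm_ring
  rw [h2] at h
  exact add_left_cancel (add_right_cancel h)

end D

lemma mul_diag (f : IncidenceAlgebra R X) (z s t : X) :
    (f * sng R z z) s t = if t = z then f s z else 0 := mul_sng f le_rfl s t

lemma diag_mul (f : IncidenceAlgebra R X) (z s t : X) :
    (sng R z z * f) s t = if s = z then f z t else 0 := sng_mul f le_rfl s t

lemma app2 {f g : IncidenceAlgebra R X} (h : f = g) (s t : X) : f s t = g s t := by rw [h]

section D2
variable {D : IncidenceAlgebra R X →ₗ[R] IncidenceAlgebra R X}

lemma diag0 (hD : ∀ f, D (f * f) = D f * f + f * D f) (z : X) :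
    D (sng R z z) z z = 0 := by
  have h : sng R z z * sng R z z = sng R z z := by
    rw [sng_mul_sng le_rfl le_rfl, if_pos rfl]
  have h1 := hD (sng R z z)
  rw [h] at h1
  have h2 := app2 h1 z z
  simp only [IncidenceAlgebra.add_apply, mul_diag, diag_mul, if_pos] at h2
  linear_combination -h2

lemma pairing (hD : ∀ f, D (f * f) = D f * f + f * D f) {u z : X} (huz : u ≠ z) :
    D (sng R u u) u z + D (sng R z z) u z = 0 := by
  have h0 : sng R u u * sng R z z + sng R z z * sng R u u = 0 := by
    rw [sng_mul_sng le_rfl le_rfl, sng_mul_sng le_rfl le_rfl, if_neg huz,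
      if_neg (Ne.symm huz), add_zero]
  have h := polar hD (sng R u u) (sng R z z)
  rw [h0, map_zero] at h
  have h2 := app2 h.symm u z
  simp only [IncidenceAlgebra.add_apply, IncidenceAlgebra.zero_apply, mul_diag, diag_mul,
    if_true, if_neg huz, if_neg (Ne.symm huz), add_zero, eq_self_iff_true] at h2
  linear_combination h2

lemma cycF (htf : ∀ r : R, 2 • r = 0 → r = 0)
    (hD : ∀ f, D (f * f) = D f * f + f * D f) {p q : X}
    (hpq : p ≤ q) (hqp : q ≤ p) (hne : p ≠ q) :
    D (sng R q p) p q = 0 := by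
  have key : sng R q p * sng R p q = sng R q q := by
    rw [sng_mul_sng hqp hpq, if_pos rfl]
  have key2 : sng R q p * sng R p q * sng R q p = sng R q p := by
    rw [key, sng_mul_sng le_rfl hqp, if_pos rfl]
  have h := triple htf hD (sng R q p) (sng R p q)
  rw [key2, key] at h
  have h2 := app2 h p q
  rw [IncidenceAlgebra.add_apply, IncidenceAlgebra.add_apply,
    mul_sng _ hqp, mul_sng _ hqp] at h2
  simp only [diag_mul, if_neg (Ne.symm hne), if_neg hne, add_zero, zero_add] at h2
  linear_combination h2

lemma cyc1 (htf : ∀ r : R, 2 • r = 0 → r = 0)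
    (hD : ∀ f, D (f * f) = D f * f + f * D f) {p q : X}
    (hpq : p ≤ q) (hqp : q ≤ p) (hne : p ≠ q) :
    D (sng R p q) p q + D (sng R q p) q p = 0 := by
  have key : sng R p q * sng R q p = sng R p p := by
    rw [sng_mul_sng hpq hqp, if_pos rfl]
  have key2 : sng R p q * sng R q p * sng R p q = sng R p q := by
    rw [key, sng_mul_sng le_rfl hpq, if_pos rfl]
  have h := triple htf hD (sng R p q) (sng R q p)
  rw [key2, key] at h
  have h2 := app2 h p q
  rw [IncidenceAlgebra.add_apply, IncidenceAlgebra.add_apply,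
    mul_sng _ hpq, mul_sng _ hpq, mul_sng _ hqp, sng_mul _ hpq] at h2
  simp only [diag_mul, if_true, eq_self_iff_true, if_pos] at h2
  linear_combination -h2

lemma Lentry (htf : ∀ r : R, 2 • r = 0 → r = 0)
    (hD : ∀ f, D (f * f) = D f * f + f * D f) {x z y : X}
    (hxz : x ≤ z) (hzy : z ≤ y) :
    D (sng R x z) x z + D (sng R z y) z y = D (sng R x y) x y := by
  by_cases hzx : z = x
  · subst hzx
    rw [diag0 hD z, zero_add]
  by_cases hzy' : z = y
  · subst hzy'
    rw [diag0 hD z, add_zero]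
  by_cases hxy : x = y
  · subst hxy
    rw [diag0 hD x]
    exact cyc1 htf hD hxz hzy (Ne.symm hzx)
  · have h0 : sng R x z * sng R z y + sng R z y * sng R x z = sng R x y := by
      rw [sng_mul_sng hxz hzy, sng_mul_sng hzy hxz, if_pos rfl,
        if_neg (fun h => hxy h.symm), add_zero]
    have h := polar hD (sng R x z) (sng R z y)
    rw [h0] at h
    have h2 := app2 h x y
    have hyz : ¬(y = z) := fun h => hzy' h.symm
    have hxz' : ¬(x = z) := fun h => hzx h.symm
    rw [IncidenceAlgebra.add_apply, IncidenceAlgebra.add_apply, IncidenceAlgebra.add_apply,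
      mul_sng _ hzy, sng_mul _ hxz, mul_sng _ hxz, sng_mul _ hzy] at h2
    simp only [if_true, eq_self_iff_true, if_pos, if_neg hyz, if_neg hxz', add_zero] at h2
    linear_combination -h2

lemma Mentry (htf : ∀ r : R, 2 • r = 0 → r = 0)
    (hD : ∀ f, D (f * f) = D f * f + f * D f) {p q : X} (hpq : p ≤ q)
    (f : IncidenceAlgebra R X) :
    D f p q = f p q * D (sng R p q) p q
      - (D (sng R p p) * f) p q - (f * D (sng R q q)) p q := by
  by_cases hne : p = q
  · subst hne
    have h := triple htf hD (sng R p p) f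
    rw [sandwich f p p, map_smul, mul_assoc (sng R p p) f (D (sng R p p))] at h
    have h2 := app2 h p p
    simp only [IncidenceAlgebra.constSMul_apply, smul_eq_mul, IncidenceAlgebra.add_apply,
      mul_diag, diag_mul, if_pos, if_true, eq_self_iff_true] at h2
    linear_combination -h2
  · have h := triple2 htf hD (sng R p p) (sng R q q) f
    rw [sandwich f p q, sandwich f q p, map_add, map_smul, map_smul,
      mul_assoc (sng R p p) f (D (sng R q q)), mul_assoc (sng R q q) f (D (sng R p p))] at h
    have h2 := app2 h p q
    simp only [IncidenceAlgebra.add_apply, IncidenceAlgebra.constSMul_apply, smul_eq_mul,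
      mul_diag, diag_mul, if_true, eq_self_iff_true, if_pos,
      if_neg hne, if_neg (Ne.symm hne), add_zero, zero_add] at h2
    have hz : f q p * D (sng R q p) p q = 0 := by
      by_cases hqp : q ≤ p
      · rw [cycF htf hD hpq hqp hne, mul_zero]
      · rw [IncidenceAlgebra.apply_eq_zero_of_not_le hqp, zero_mul]
    linear_combination -h2 + hz

end D2

end IncAuxJD15

open Finset IncAuxJD15 in
/-- Main theorem. Let `R` be a 2-torsion free commutative ring with identity
and `X` a locally finite preordered set. Every Jordan derivation of the incidence algebra
`I(X,R)` is a derivation. -/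
theorem jordan_derivation_is_derivation_incidenceAlgebra {R X : Type*} [CommRing R]
    [Preorder X] [LocallyFiniteOrder X] [DecidableEq X]
    (htf : ∀ r : R, 2 • r = 0 → r = 0)
    (D : IncidenceAlgebra R X →ₗ[R] IncidenceAlgebra R X)
    (hD : ∀ f : IncidenceAlgebra R X, D (f * f) = D f * f + f * D f) :
    ∀ f g : IncidenceAlgebra R X, D (f * g) = D f * g + f * D g := by
  intro f g
  ext x y hxy
  rw [IncidenceAlgebra.add_apply, IncidenceAlgebra.mul_apply, IncidenceAlgebra.mul_apply,
    Mentry htf hD hxy (f * g)]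
  have hs1 : ∀ z ∈ Icc x y, D f x z * g z y =
      (f x z * D (sng R x z) x z - (D (sng R x x) * f) x z - (f * D (sng R z z)) x z)
        * g z y := by
    intro z hz
    rw [Mentry htf hD (Finset.mem_Icc.1 hz).1 f]
  have hs2 : ∀ z ∈ Icc x y, f x z * D g z y =
      f x z * (g z y * D (sng R z y) z y - (D (sng R z z) * g) z y
        - (g * D (sng R y y)) z y) := by
    intro z hz
    rw [Mentry htf hD (Finset.mem_Icc.1 hz).2 g]
  rw [Finset.sum_congr rfl hs1, Finset.sum_congr rfl hs2]
  have h1 : ∑ z ∈ Icc x y, f x z * g z y * D (sng R x y) x y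
      = (f * g) x y * D (sng R x y) x y := by
    rw [IncidenceAlgebra.mul_apply, Finset.sum_mul]
  have h2 : ∑ z ∈ Icc x y, (D (sng R x x) * f) x z * g z y
      = (D (sng R x x) * (f * g)) x y := by
    rw [← mul_assoc]
    exact (IncidenceAlgebra.mul_apply _ _ _ _).symm
  have h3 : ∑ z ∈ Icc x y, f x z * (g * D (sng R y y)) z y
      = ((f * g) * D (sng R y y)) x y := by
    rw [mul_assoc]
    exact (IncidenceAlgebra.mul_apply _ _ _ _).symm
  have h4 : ∑ z ∈ Icc x y,
      ((f * D (sng R z z)) x z * g z y + f x z * (D (sng R z z) * g) z y) = 0 := by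
    have e1 : ∀ z ∈ Icc x y, (f * D (sng R z z)) x z * g z y
        = ∑ u ∈ Icc x y, f x u * (D (sng R z z)) u z * g z y := by
      intro z hz
      obtain ⟨hxz, hzy⟩ := Finset.mem_Icc.1 hz
      rw [IncidenceAlgebra.mul_apply, Finset.sum_mul]
      apply Finset.sum_subset (Finset.Icc_subset_Icc le_rfl hzy)
      intro u hu hnot
      have hnu : ¬u ≤ z := fun hle => hnot (Finset.mem_Icc.2 ⟨(Finset.mem_Icc.1 hu).1, hle⟩)
      rw [IncidenceAlgebra.apply_eq_zero_of_not_le hnu, mul_zero, zero_mul]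
    have e2 : ∀ z ∈ Icc x y, f x z * (D (sng R z z) * g) z y
        = ∑ u ∈ Icc x y, f x z * ((D (sng R z z)) z u * g u y) := by
      intro z hz
      obtain ⟨hxz, hzy⟩ := Finset.mem_Icc.1 hz
      rw [IncidenceAlgebra.mul_apply, Finset.mul_sum]
      apply Finset.sum_subset (Finset.Icc_subset_Icc hxz le_rfl)
      intro u hu hnot
      have hnu : ¬z ≤ u := fun hle => hnot (Finset.mem_Icc.2 ⟨hle, (Finset.mem_Icc.1 hu).2⟩)
      rw [IncidenceAlgebra.apply_eq_zero_of_not_le hnu, zero_mul, mul_zero]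
    calc ∑ z ∈ Icc x y, ((f * D (sng R z z)) x z * g z y + f x z * (D (sng R z z) * g) z y)
        = ∑ z ∈ Icc x y, ((∑ u ∈ Icc x y, f x u * (D (sng R z z)) u z * g z y)
            + ∑ u ∈ Icc x y, f x z * ((D (sng R z z)) z u * g u y)) := by
          refine Finset.sum_congr rfl fun z hz => ?_
          rw [e1 z hz, e2 z hz]
      _ = (∑ z ∈ Icc x y, ∑ u ∈ Icc x y, f x u * (D (sng R z z)) u z * g z y)
            + ∑ z ∈ Icc x y, ∑ u ∈ Icc x y, f x z * ((D (sng R z z)) z u * g u y) :=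
          Finset.sum_add_distrib
      _ = (∑ z ∈ Icc x y, ∑ u ∈ Icc x y, f x u * (D (sng R z z)) u z * g z y)
            + ∑ u ∈ Icc x y, ∑ z ∈ Icc x y, f x z * ((D (sng R z z)) z u * g u y) := by
          congr 1
          exact Finset.sum_comm
      _ = 0 := by
          rw [← Finset.sum_add_distrib]
          apply Finset.sum_eq_zero
          intro z _
          rw [← Finset.sum_add_distrib]
          apply Finset.sum_eq_zero
          intro u _
          by_cases huz : u = z
          · subst huz
            rw [diag0 hD u]
            ring
          · have hp := pairing hD huz
            linear_combination (f x u * g z y) * hp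
  have key : ∀ z ∈ Icc x y,
      (f x z * D (sng R x z) x z - (D (sng R x x) * f) x z - (f * D (sng R z z)) x z) * g z y
        + f x z * (g z y * D (sng R z y) z y - (D (sng R z z) * g) z y
            - (g * D (sng R y y)) z y)
      = f x z * g z y * D (sng R x y) x y
        - (D (sng R x x) * f) x z * g z y
        - f x z * (g * D (sng R y y)) z y
        - ((f * D (sng R z z)) x z * g z y + f x z * (D (sng R z z) * g) z y) := by
    intro z hz
    obtain ⟨hxz, hzy⟩ := Finset.mem_Icc.1 hz
    have hL := Lentry htf hD hxz hzy
    linear_combination (f x z * g z y) * hL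
  rw [← Finset.sum_add_distrib, Finset.sum_congr rfl key,
    Finset.sum_sub_distrib, Finset.sum_sub_distrib, Finset.sum_sub_distrib,
    h4, sub_zero, h1, h2, h3]
end
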